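/- arXiv:2005.08136 — 8 statements merged into one kernel-verified Lean document; each statement's English description precedes it below -/
import Mathlib

section
/- Let E be an exponential random variable with rate 1. Then for every bounded measurable f : (0,∞) → ℝ, E[f(ν←(E))] = ∫_0^∞ f(ν←(γ))·e^{−γ} dγ = ∫_{(0,∞)} f(y)·exp(−ν([y,∞))) ν(dy). -/
/-!
Write `G y = ν([y,∞))`. It is antitone, continuous on `(0,∞)` (no atoms, finite tails), and
runs from `∞` at `0+` down to `0` at `∞`. Hence for `γ, b > 0` we get `b < ν←(γ) ↔ γ < G b`
and `G (ν←(γ)) = γ`. The first relation says that `ν←` pushes Lebesgue measure on `(0,∞)`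
forward to `ν`: both measures vanish on `(-∞,0]` and give `(b,∞)` the mass `G b`. The second
identity of the theorem is then the change of variables `y = ν←(γ)` applied to
`y ↦ f y · exp (-G y)`, and the first is the density `e^{-γ}` of the exponential law.
-/

open MeasureTheory Set Filter Topology ProbabilityTheory
open scoped ENNReal

namespace MeasureTheory

theorem Measure.ext_of_measure_Ioi {μ ν : Measure ℝ} {a : ℝ} (hμ : μ (Iic a) = 0)
    (hν : ν (Iic a) = 0) (hfin : ∀ b, a < b → ν (Ioi b) < ∞)
    (h : ∀ b, a < b → μ (Ioi b) = ν (Ioi b)) : μ = ν := by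
  have restrict_Ioi_eq : ∀ b, a < b → μ.restrict (Ioi b) = ν.restrict (Ioi b) := by
    intro b hb
    have : IsFiniteMeasure (μ.restrict (Ioi b)) :=
      ⟨by rw [Measure.restrict_apply_univ, h b hb]; exact hfin b hb⟩
    refine ext_of_generate_finite _ (borel_eq_generateFrom_Ioi ℝ) isPiSystem_Ioi ?_ ?_
    · rintro _ ⟨c, rfl⟩
      rw [Measure.restrict_apply measurableSet_Ioi, Measure.restrict_apply measurableSet_Ioi,
        Ioi_inter_Ioi, h _ (hb.trans_le le_sup_right)]
    · rw [Measure.restrict_apply_univ, Measure.restrict_apply_univ, h b hb]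
  obtain ⟨u, -, hau, hu⟩ := exists_seq_strictAnti_tendsto a
  have hU : ⋃ n, Ioi (u n) = Ioi a := by
    ext x
    simp only [mem_iUnion, mem_Ioi]
    exact ⟨fun ⟨n, hn⟩ => (hau n).trans hn, fun hx => (hu.eventually (gt_mem_nhds hx)).exists⟩
  have restrict_self : ∀ ρ : Measure ℝ, ρ (Iic a) = 0 → ρ.restrict (Ioi a) = ρ := fun ρ hρ =>
    Measure.restrict_eq_self_of_ae_mem (by simpa [ae_iff, ← Iic_def] using hρ)
  rw [← restrict_self μ hμ, ← restrict_self ν hν, ← hU, Measure.restrict_iUnion_congr]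
  exact fun n => restrict_Ioi_eq _ (hau n)

variable {ν : Measure ℝ}

theorem measure_Ioi_le_of_forall_measure_Ici_le {c : ℝ} {t : ℝ≥0∞}
    (h : ∀ y, c < y → ν (Ici y) ≤ t) : ν (Ioi c) ≤ t := by
  obtain ⟨u, hu_anti, hcu, hu⟩ := exists_seq_strictAnti_tendsto c
  rw [← iUnion_Ici_eq_Ioi_of_lt_of_tendsto hcu hu,
    Monotone.measure_iUnion fun _ _ hmn => Ici_subset_Ici.2 (hu_anti.antitone hmn)]
  exact iSup_le fun n => h _ (hcu n)

theorem le_measure_Ici_of_forall_mem_Ioo {a c : ℝ} {t : ℝ≥0∞} (hac : a < c)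
    (hfin : ν (Ici a) ≠ ∞) (h : ∀ y ∈ Ioo a c, t ≤ ν (Ici y)) : t ≤ ν (Ici c) := by
  obtain ⟨u, hu_mono, hu_mem, hu⟩ := exists_seq_strictMono_tendsto' hac
  have hInter : ⋂ n, Ici (u n) = Ici c := by
    ext x
    simp only [mem_iInter, mem_Ici]
    exact ⟨fun hx => le_of_tendsto' hu hx, fun hx n => (hu_mem n).2.le.trans hx⟩
  have hlim := tendsto_measure_iInter_atTop (fun n => nullMeasurableSet_Ici)
    (fun _ _ hmn => Ici_subset_Ici.2 (hu_mono.monotone hmn))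
    ⟨0, ne_top_of_le_ne_top hfin (measure_mono (Ici_subset_Ici.2 (hu_mem 0).1.le))⟩
  rw [hInter] at hlim
  exact ge_of_tendsto' hlim fun n => h _ (hu_mem n)

theorem tendsto_measure_Ici_atTop {a : ℝ} (hfin : ν (Ici a) ≠ ∞) :
    Tendsto (fun y => ν (Ici y)) atTop (𝓝 0) := by
  have hlim := tendsto_measure_iInter_atTop (μ := ν) (fun y : ℝ => nullMeasurableSet_Ici)
    (fun _ _ hxy => Ici_subset_Ici.2 hxy) ⟨a, hfin⟩
  rwa [iInter_eq_empty_iff.2 fun x => ⟨x + 1, by simp⟩, measure_empty] at hlim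

/-- The paper's `ν←`. For `x > 0` the set is nonempty, so the junk value `sInf ∅ = 0` (where the
paper has `∞`) can only occur at `x ≤ 0`. -/
noncomputable def Measure.tailInverse (ν : Measure ℝ) (x : ℝ) : ℝ :=
  sInf {y | 0 < y ∧ ν (Ici y) ≤ ENNReal.ofReal x}

section TailInverse

variable {x : ℝ}

theorem nonempty_tailInverse_set (htail : ∀ y, 0 < y → ν (Ici y) < ∞) (hx : 0 < x) :
    {y | 0 < y ∧ ν (Ici y) ≤ ENNReal.ofReal x}.Nonempty := by
  have hsmall := (tendsto_measure_Ici_atTop (htail 1 one_pos).ne).eventually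
    (gt_mem_nhds (ENNReal.ofReal_pos.2 hx))
  obtain ⟨y, hy, hyx⟩ := ((eventually_gt_atTop 0).and hsmall).exists
  exact ⟨y, hy, hyx.le⟩

theorem le_tailInverse (htail : ∀ y, 0 < y → ν (Ici y) < ∞) (hx : 0 < x) {ε : ℝ}
    (hε : ENNReal.ofReal x < ν (Ici ε)) : ε ≤ ν.tailInverse x :=
  le_csInf (nonempty_tailInverse_set htail hx) fun _ hy => le_of_not_gt fun hyε =>
    (hε.trans_le (measure_mono (Ici_subset_Ici.2 hyε.le))).not_ge hy.2

theorem tailInverse_pos (hinf : ν (Ioi 0) = ∞) (htail : ∀ y, 0 < y → ν (Ici y) < ∞)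
    (hx : 0 < x) : 0 < ν.tailInverse x := by
  obtain ⟨ε, hε, hεx⟩ : ∃ ε, 0 < ε ∧ ENNReal.ofReal x < ν (Ici ε) := by
    by_contra! h
    have := measure_Ioi_le_of_forall_measure_Ici_le h
    exact (hinf ▸ this).not_gt ENNReal.ofReal_lt_top
  exact hε.trans_le (le_tailInverse htail hx hεx)

theorem antitoneOn_tailInverse (htail : ∀ y, 0 < y → ν (Ici y) < ∞) :
    AntitoneOn ν.tailInverse (Ioi 0) := fun _ hx _ _ hxx' =>
  csInf_le_csInf ⟨0, fun _ hy => hy.1.le⟩ (nonempty_tailInverse_set htail hx)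
    fun _ hy => ⟨hy.1, hy.2.trans (ENNReal.ofReal_le_ofReal hxx')⟩

theorem aemeasurable_tailInverse (htail : ∀ y, 0 < y → ν (Ici y) < ∞) :
    AEMeasurable ν.tailInverse (volume.restrict (Ioi 0)) :=
  aemeasurable_restrict_of_antitoneOn measurableSet_Ioi (antitoneOn_tailInverse htail)

variable [NullSingletonClass ν]

theorem measure_Ici_tailInverse_le (htail : ∀ y, 0 < y → ν (Ici y) < ∞) (hx : 0 < x) :
    ν (Ici (ν.tailInverse x)) ≤ ENNReal.ofReal x := by
  rw [← measure_congr Ioi_ae_eq_Ici]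
  refine measure_Ioi_le_of_forall_measure_Ici_le fun y hy => ?_
  obtain ⟨z, hz, hzy⟩ := exists_lt_of_csInf_lt (nonempty_tailInverse_set htail hx) hy
  exact (measure_mono (Ici_subset_Ici.2 hzy.le)).trans hz.2

theorem lt_tailInverse_iff (htail : ∀ y, 0 < y → ν (Ici y) < ∞) (hx : 0 < x) {b : ℝ}
    (hb : 0 < b) : b < ν.tailInverse x ↔ ENNReal.ofReal x < ν (Ici b) := by
  refine ⟨fun h => lt_of_not_ge fun hle => ?_, fun h => lt_of_not_ge fun hle => ?_⟩
  · exact notMem_of_lt_csInf h ⟨0, fun _ hy => hy.1.le⟩ ⟨hb, hle⟩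
  · exact (h.trans_le ((measure_mono (Ici_subset_Ici.2 hle)).trans
      (measure_Ici_tailInverse_le htail hx))).false

theorem measure_Ici_tailInverse (hinf : ν (Ioi 0) = ∞) (htail : ∀ y, 0 < y → ν (Ici y) < ∞)
    (hx : 0 < x) : ν (Ici (ν.tailInverse x)) = ENNReal.ofReal x := by
  have hpos := tailInverse_pos hinf htail hx
  refine le_antisymm (measure_Ici_tailInverse_le htail hx) ?_
  refine le_measure_Ici_of_forall_mem_Ioo (half_lt_self hpos) (htail _ (half_pos hpos)).ne
    fun y hy => ?_
  exact ((lt_tailInverse_iff htail hx ((half_pos hpos).trans hy.1)).1 hy.2).le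

theorem map_volume_Ioi_tailInverse (hsupp : ν (Iic 0) = 0) (hinf : ν (Ioi 0) = ∞)
    (htail : ∀ y, 0 < y → ν (Ici y) < ∞) :
    (volume.restrict (Ioi 0)).map ν.tailInverse = ν := by
  have hmeas := aemeasurable_tailInverse htail
  refine Measure.ext_of_measure_Ioi (a := 0) ?_ hsupp
    (fun b hb => (measure_mono Ioi_subset_Ici_self).trans_lt (htail b hb)) fun b hb => ?_
  · rw [Measure.map_apply_of_aemeasurable hmeas measurableSet_Iic,
      Measure.restrict_apply' measurableSet_Ioi]
    refine measure_mono_null (fun γ ⟨hγb, hγ⟩ => ?_) measure_empty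
    exact (tailInverse_pos hinf htail hγ).not_ge hγb
  · have hpre : ν.tailInverse ⁻¹' Ioi b ∩ Ioi 0 = Ioo 0 (ν (Ici b)).toReal := by
      ext γ
      simp only [mem_inter_iff, mem_preimage, mem_Ioi, mem_Ioo, and_comm (a := b < _)]
      refine and_congr_right fun hγ => ?_
      rw [lt_tailInverse_iff htail hγ hb, ENNReal.ofReal_lt_iff_lt_toReal hγ.le (htail b hb).ne]
    rw [Measure.map_apply_of_aemeasurable hmeas measurableSet_Ioi,
      Measure.restrict_apply' measurableSet_Ioi, hpre, Real.volume_Ioo, sub_zero,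
      ENNReal.ofReal_toReal (htail b hb).ne, measure_congr Ioi_ae_eq_Ici]

end TailInverse

end MeasureTheory

namespace ProbabilityTheory

theorem expMeasure_eq_withDensity (r : ℝ) :
    expMeasure r = (volume.restrict (Ioi 0)).withDensity
      fun x => ENNReal.ofReal (r * Real.exp (-(r * x))) := by
  have hpdf : gammaPDF 1 r =
      (Ici 0).indicator fun x => ENNReal.ofReal (r * Real.exp (-(r * x))) := by
    ext x
    by_cases hx : 0 ≤ x <;> simp [gammaPDF, gammaPDFReal, hx]
  rw [expMeasure, gammaMeasure, hpdf, withDensity_indicator measurableSet_Ici,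
    Measure.restrict_congr_set Ioi_ae_eq_Ici]

theorem integral_expMeasure {r : ℝ} (hr : 0 ≤ r) (g : ℝ → ℝ) :
    ∫ x, g x ∂expMeasure r = ∫ x in Ioi 0, g x * (r * Real.exp (-(r * x))) := by
  rw [expMeasure_eq_withDensity, integral_withDensity_eq_integral_toReal_smul (by fun_prop)
    (ae_of_all _ fun _ => ENNReal.ofReal_lt_top)]
  refine integral_congr_ae (ae_of_all _ fun x => ?_)
  simp only [smul_eq_mul, ENNReal.toReal_ofReal (by positivity : 0 ≤ r * Real.exp (-(r * x)))]
  ring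

end ProbabilityTheory

theorem inverse_levy_first_rate_law_general
    {Ω : Type*} [MeasurableSpace Ω] (P : Measure Ω)
    (ν : Measure ℝ)
    (hν_atomless : ∀ x : ℝ, ν {x} = 0)
    (hν_supp : ν (Set.Iic 0) = 0)
    (hν_inf : ν (Set.Ioi 0) = ⊤)
    (hν_tail : ∀ y : ℝ, 0 < y → ν (Set.Ici y) < ⊤)
    (νinv : ℝ → ℝ)
    (hνinv : ∀ x : ℝ, νinv x = sInf {y : ℝ | 0 < y ∧ ν (Set.Ici y) ≤ ENNReal.ofReal x})
    (E : Ω → ℝ) (hE : Measurable E)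
    (hElaw : Measure.map E P = ProbabilityTheory.expMeasure 1)
    (f : ℝ → ℝ) (hf : Measurable f) :
    (∫ ω, f (νinv (E ω)) ∂P = ∫ γ in Set.Ioi (0 : ℝ), f (νinv γ) * Real.exp (-γ)) ∧
      (∫ γ in Set.Ioi (0 : ℝ), f (νinv γ) * Real.exp (-γ))
        = ∫ y, f y * Real.exp (-(ν (Set.Ici y)).toReal) ∂ν := by
  have : NullSingletonClass ν := ⟨hν_atomless⟩
  obtain rfl : νinv = ν.tailInverse := funext hνinv
  have hinv_meas := aemeasurable_tailInverse hν_tail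
  constructor
  · have hinv_meas' : AEMeasurable ν.tailInverse (expMeasure 1) := by
      rw [expMeasure_eq_withDensity]
      exact hinv_meas.mono_ac (withDensity_absolutelyContinuous _ _)
    have hmeas : AEStronglyMeasurable (f ∘ ν.tailInverse) (P.map E) := by
      rw [hElaw]
      exact (hf.comp_aemeasurable hinv_meas').aestronglyMeasurable
    calc ∫ ω, f (ν.tailInverse (E ω)) ∂P = ∫ x, (f ∘ ν.tailInverse) x ∂P.map E :=
          (integral_map hE.aemeasurable hmeas).symm
      _ = _ := by
          rw [hElaw, integral_expMeasure zero_le_one]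
          simp only [Function.comp_apply, one_mul]
  · have hg : Measurable fun y => f y * Real.exp (-(ν (Ici y)).toReal) := by
      have htail_anti : Antitone fun y => ν (Ici y) := fun _ _ h =>
        measure_mono (Ici_subset_Ici.2 h)
      exact hf.mul (htail_anti.measurable.ennreal_toReal.neg.exp)
    calc ∫ γ in Ioi 0, f (ν.tailInverse γ) * Real.exp (-γ)
        = ∫ γ in Ioi 0,
            f (ν.tailInverse γ) * Real.exp (-(ν (Ici (ν.tailInverse γ))).toReal) := by
          refine setIntegral_congr_fun measurableSet_Ioi fun γ (hγ : 0 < γ) => ?_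
          rw [measure_Ici_tailInverse hν_inf hν_tail hγ, ENNReal.toReal_ofReal hγ.le]
      _ = ∫ y, f y * Real.exp (-(ν (Ici y)).toReal)
            ∂(volume.restrict (Ioi 0)).map ν.tailInverse :=
          (integral_map hinv_meas hg.aestronglyMeasurable).symm
      _ = _ := by rw [map_volume_Ioi_tailInverse hν_supp hν_inf hν_tail]

/-- Let `ν` be an atomless σ-finite Borel measure on `(0,∞)` with infinite
total mass and finite tails, and `ν←` its generalized inverse.  If `E` is a rate-1
exponential random variable then
`E[f(ν←(E))] = ∫_0^∞ f(ν←(γ)) e^{−γ} dγ = ∫_{(0,∞)} f(y) exp(−ν([y,∞))) ν(dy)`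
for every bounded measurable `f`. -/
theorem inverse_levy_first_rate_law
    {Ω : Type*} [MeasurableSpace Ω] (P : Measure Ω) [IsProbabilityMeasure P]
    (ν : Measure ℝ) [SigmaFinite ν]
    (hν_atomless : ∀ x : ℝ, ν {x} = 0)
    (hν_supp : ν (Set.Iic 0) = 0)
    (hν_inf : ν (Set.Ioi 0) = ⊤)
    (hν_tail : ∀ y : ℝ, 0 < y → ν (Set.Ici y) < ⊤)
    (νinv : ℝ → ℝ)
    (hνinv : ∀ x : ℝ, νinv x = sInf {y : ℝ | 0 < y ∧ ν (Set.Ici y) ≤ ENNReal.ofReal x})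
    (E : Ω → ℝ) (hE : Measurable E)
    (hElaw : Measure.map E P = ProbabilityTheory.expMeasure 1)
    (f : ℝ → ℝ) (hf : Measurable f) (C : ℝ) (hfC : ∀ x, |f x| ≤ C) :
    (∫ ω, f (νinv (E ω)) ∂P = ∫ γ in Set.Ioi (0 : ℝ), f (νinv γ) * Real.exp (-γ)) ∧
      (∫ γ in Set.Ioi (0 : ℝ), f (νinv γ) * Real.exp (-γ))
        = ∫ y, f y * Real.exp (-(ν (Set.Ici y)).toReal) ∂ν :=
  inverse_levy_first_rate_law_general P ν hν_atomless hν_supp hν_inf hν_tail νinv hνinv E hE hElaw f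
    hf
end

section
/- For every g > 0 and every bounded measurable f : (0,∞) → ℝ, ∫_0^∞ f(ν←(g + γ))·e^{−γ} dγ = ∫_{(0, ν←(g))} f(y)·exp(−ν([y, ν←(g)))) ν(dy). -/
/-!
Write `b = ν←(g)` and `φ y = ν([y, b))`. Since `ν` has no atoms, the tail `y ↦ ν([y, ∞))` is
continuous on `(0, ∞)`, so `ν([ν←(x), ∞)) = x` for `x > 0`. Hence for `c ≥ 0` the sublevel set
`{y ∈ (0, b) | φ y ≤ c}` is `[ν←(g + c), b)`, of `ν`-mass `(g + c) - g = c`: the map `φ` pushes `ν`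
restricted to `(0, b)` forward to Lebesgue measure on `(0, ∞)`. Moreover `ν←(g + φ y) = y` unless
`y` is the right end point of a `ν`-null interval, which happens only on a `ν`-null set. The change
of variables `γ = φ y` then turns the left integral into the right one.
-/

open MeasureTheory Set Filter Topology ENNReal

namespace MeasureTheory

theorem tendsto_measure_Ici_nhdsGT (μ : Measure ℝ) (c : ℝ) :
    Tendsto (fun z ↦ μ (Ici z)) (𝓝[>] c) (𝓝 (μ (Ioi c))) := by
  have : (atBot : Filter (Ioi c)).IsCountablyGenerated := by
    rw [← comap_coe_Ioi_nhdsGT c]; infer_instance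
  have hU : ⋃ z : Ioi c, Ici (z : ℝ) = Ioi c := by
    ext x
    simp only [mem_iUnion, mem_Ici, Subtype.exists, mem_Ioi, exists_prop]
    exact ⟨fun ⟨z, hz, hzx⟩ ↦ hz.trans_le hzx, fun hx ↦ ⟨x, hx, le_rfl⟩⟩
  rw [← map_coe_Ioi_atBot c, tendsto_map'_iff]
  have := tendsto_measure_iUnion_atBot (μ := μ) (s := fun z : Ioi c ↦ Ici (z : ℝ))
    fun _ _ h ↦ Ici_subset_Ici.2 h
  rwa [hU] at this

theorem tendsto_measure_Ici_nhdsLT {μ : Measure ℝ} {b c : ℝ} (hbc : b < c)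
    (hb : μ (Ici b) ≠ ∞) : Tendsto (fun z ↦ μ (Ici z)) (𝓝[<] c) (𝓝 (μ (Ici c))) := by
  have : (atTop : Filter (Iio c)).IsCountablyGenerated := by
    rw [← comap_coe_Iio_nhdsLT c]; infer_instance
  have hI : ⋂ z : Iio c, Ici (z : ℝ) = Ici c := by
    ext x
    simp only [mem_iInter, mem_Ici, Subtype.forall, mem_Iio]
    exact ⟨fun h ↦ le_of_forall_lt_imp_le_of_dense h, fun h z hz ↦ hz.le.trans h⟩
  rw [← map_coe_Iio_atTop c, tendsto_map'_iff]
  have := tendsto_measure_iInter_atTop (μ := μ) (s := fun z : Iio c ↦ Ici (z : ℝ))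
    (fun _ ↦ measurableSet_Ici.nullMeasurableSet) (fun _ _ h ↦ Ici_subset_Ici.2 h) ⟨⟨b, hbc⟩, hb⟩
  rwa [hI] at this

theorem Measure.ext_of_Iic_of_ne_top {α : Type*} [TopologicalSpace α] {m : MeasurableSpace α}
    [SecondCountableTopology α] [LinearOrder α] [OrderTopology α] [BorelSpace α] [NoMinOrder α]
    {μ ν : Measure α} (hμ : ∀ a, μ (Iic a) ≠ ∞) (h : ∀ a, μ (Iic a) = ν (Iic a)) : μ = ν := by
  refine Measure.ext_of_Ioc' μ ν
    (fun a b _ ↦ ne_top_of_le_ne_top (hμ b) (measure_mono Ioc_subset_Iic_self)) fun a b hab ↦ ?_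
  have hdiff : Ioc a b = Iic b \ Iic a := by rw [sdiff_eq, compl_Iic, Iic_inter_Ioi]
  rw [hdiff, measure_sdiff (Iic_subset_Iic.2 hab.le) measurableSet_Iic.nullMeasurableSet
    (hμ a), measure_sdiff (Iic_subset_Iic.2 hab.le) measurableSet_Iic.nullMeasurableSet
    (h a ▸ hμ a), h, h]

theorem measure_setOf_measure_Ioo_eq_zero (μ : Measure ℝ) [NullSingletonClass μ] (q : ℝ) :
    μ {y | q < y ∧ μ (Ioo q y) = 0} = 0 := by
  set E := {y | q < y ∧ μ (Ioo q y) = 0}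
  obtain ⟨T, hTE, hTc, hT⟩ := TopologicalSpace.isOpen_biUnion_countable E (fun y ↦ Ioo q y)
    fun _ _ ↦ isOpen_Ioo
  have hcover : E ⊆ (⋃ y ∈ T, Ioo q y) ∪ (E \ ⋃ y ∈ E, Ioo q y) := by
    intro y hy
    by_cases h : y ∈ ⋃ y ∈ E, Ioo q y
    · exact Or.inl (hT ▸ h)
    · exact Or.inr ⟨hy, h⟩
  have hsub : (E \ ⋃ y ∈ E, Ioo q y).Subsingleton := by
    intro y₁ h₁ y₂ h₂
    by_contra hne
    rcases lt_or_gt_of_ne hne with h | h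
    · exact h₁.2 (mem_biUnion h₂.1 ⟨h₁.1.1, h⟩)
    · exact h₂.2 (mem_biUnion h₁.1 ⟨h₂.1.1, h⟩)
  refine measure_mono_null hcover (measure_union_null ?_ (hsub.measure_zero μ))
  exact (measure_biUnion_null_iff hTc).2 fun y hy ↦ (hTE hy).2

theorem ae_forall_lt_measure_Ioo_ne_zero (μ : Measure ℝ) [NullSingletonClass μ] :
    ∀ᵐ y ∂μ, ∀ z < y, μ (Ioo z y) ≠ 0 := by
  refine measure_mono_null (fun y hy ↦ ?_)
    (measure_iUnion_null fun q : ℚ ↦ measure_setOf_measure_Ioo_eq_zero μ q)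
  obtain ⟨z, hzy, hz⟩ : ∃ z < y, μ (Ioo z y) = 0 := by simpa using hy
  obtain ⟨q, hzq, hqy⟩ := exists_rat_btwn hzy
  exact mem_iUnion.2 ⟨q, hqy, measure_mono_null (Ioo_subset_Ioo_left hzq.le) hz⟩

theorem measurable_toReal_measure_Ico (ν : Measure ℝ) (b : ℝ) :
    Measurable fun y ↦ (ν (Ico y b)).toReal :=
  measurable_toReal.comp (Antitone.measurable fun _ _ h ↦ measure_mono (Ico_subset_Ico_left h))

namespace Measure

/-- The generalized inverse `ν←` of the tail function `y ↦ ν([y, ∞))`. -/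
noncomputable def tailInv (ν : Measure ℝ) (x : ℝ) : ℝ :=
  sInf {y : ℝ | 0 < y ∧ ν (Ici y) ≤ ENNReal.ofReal x}

variable {ν : Measure ℝ} {x y : ℝ}

theorem tailInv_le (hy : 0 < y) (h : ν (Ici y) ≤ ENNReal.ofReal x) : ν.tailInv x ≤ y :=
  csInf_le ⟨0, fun _ hz ↦ hz.1.le⟩ ⟨hy, h⟩

theorem exists_pos_measure_Ici_le (hν_tail : ∀ y, 0 < y → ν (Ici y) < ∞) (hx : 0 < x) :
    ∃ y, 0 < y ∧ ν (Ici y) ≤ ENNReal.ofReal x := by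
  have hempty : ⋂ r : ℝ, Ici r = ∅ :=
    eq_empty_of_forall_notMem fun z hz ↦ (mem_iInter.1 hz (z + 1)).not_gt (lt_add_one z)
  have h0 := tendsto_measure_iInter_atTop (μ := ν) (s := Ici)
    (fun _ ↦ measurableSet_Ici.nullMeasurableSet) (fun _ _ h ↦ Ici_subset_Ici.2 h)
    ⟨1, (hν_tail 1 one_pos).ne⟩
  rw [hempty, measure_empty] at h0
  obtain ⟨y, hy, hy0⟩ :=
    ((h0.eventually (ge_mem_nhds (ofReal_pos.2 hx))).and (eventually_gt_atTop 0)).exists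
  exact ⟨y, hy0, hy⟩

theorem tailInv_antitoneOn (hν_tail : ∀ y, 0 < y → ν (Ici y) < ∞) :
    AntitoneOn ν.tailInv (Ioi 0) := fun _ hx _ _ hxx' ↦
  csInf_le_csInf ⟨0, fun _ hz ↦ hz.1.le⟩ (exists_pos_measure_Ici_le hν_tail hx)
    fun _ hz ↦ ⟨hz.1, hz.2.trans (ofReal_le_ofReal hxx')⟩

theorem tailInv_pos (hν_inf : ν (Ioi 0) = ∞) (hν_tail : ∀ y, 0 < y → ν (Ici y) < ∞)
    (hx : 0 < x) : 0 < ν.tailInv x := by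
  obtain ⟨y₀, hy₀, hxy₀⟩ : ∃ y₀, 0 < y₀ ∧ ENNReal.ofReal x < ν (Ici y₀) := by
    have := tendsto_measure_Ici_nhdsGT ν 0
    rw [hν_inf] at this
    exact (eventually_mem_nhdsWithin.and (this.eventually (lt_mem_nhds ofReal_lt_top))).exists
  refine hy₀.trans_le (le_csInf (exists_pos_measure_Ici_le hν_tail hx) fun z hz ↦ ?_)
  by_contra! hzy
  exact (hxy₀.trans_le (measure_mono (Ici_subset_Ici.2 hzy.le))).not_ge hz.2

theorem measure_Ici_tailInv [NullSingletonClass ν] (hν_inf : ν (Ioi 0) = ∞)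
    (hν_tail : ∀ y, 0 < y → ν (Ici y) < ∞) (hx : 0 < x) :
    ν (Ici (ν.tailInv x)) = ENNReal.ofReal x := by
  set c := ν.tailInv x
  have hc : 0 < c := tailInv_pos hν_inf hν_tail hx
  refine le_antisymm ?_ ?_
  · rw [← measure_congr Ioi_ae_eq_Ici]
    refine le_of_tendsto (tendsto_measure_Ici_nhdsGT ν c)
      (eventually_nhdsWithin_of_forall fun z hz ↦ ?_)
    obtain ⟨y, hy, hyz⟩ := exists_lt_of_csInf_lt (exists_pos_measure_Ici_le hν_tail hx) hz
    exact (measure_mono (Ici_subset_Ici.2 hyz.le)).trans hy.2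
  · refine ge_of_tendsto (tendsto_measure_Ici_nhdsLT (half_lt_self hc)
      (hν_tail _ (half_pos hc)).ne) ?_
    filter_upwards [Ioo_mem_nhdsLT (half_lt_self hc)] with z hz
    by_contra! hzx
    exact (tailInv_le ((half_pos hc).trans hz.1) hzx.le).not_gt hz.2

theorem measure_Ici_le_ofReal_iff [NullSingletonClass ν] (hν_inf : ν (Ioi 0) = ∞)
    (hν_tail : ∀ y, 0 < y → ν (Ici y) < ∞) (hx : 0 < x) (hy : 0 < y) :
    ν (Ici y) ≤ ENNReal.ofReal x ↔ ν.tailInv x ≤ y :=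
  ⟨tailInv_le hy, fun h ↦
    (measure_mono (Ici_subset_Ici.2 h)).trans (measure_Ici_tailInv hν_inf hν_tail hx).le⟩

theorem ae_tailInv_eq [NullSingletonClass ν] (hν_inf : ν (Ioi 0) = ∞)
    (hν_tail : ∀ y, 0 < y → ν (Ici y) < ∞) :
    ∀ᵐ y ∂ν, ∀ x, 0 < x → 0 < y → ν (Ici y) = ENNReal.ofReal x → ν.tailInv x = y := by
  filter_upwards [ae_forall_lt_measure_Ioo_ne_zero ν] with y hy x hx hy₀ hyx
  have hle : ν.tailInv x ≤ y := tailInv_le hy₀ hyx.le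
  refine hle.eq_or_lt.resolve_right fun hlt ↦ hy _ hlt (measure_mono_null Ioo_subset_Ico_self ?_)
  rw [← Ici_sdiff_Ici, measure_sdiff (Ici_subset_Ici.2 hle) measurableSet_Ici.nullMeasurableSet
    (hyx ▸ ofReal_ne_top), measure_Ici_tailInv hν_inf hν_tail hx, hyx, tsub_self]

variable {g c : ℝ}

theorem measure_Ici_eq_ofReal_add [NullSingletonClass ν] (hν_inf : ν (Ioi 0) = ∞)
    (hν_tail : ∀ y, 0 < y → ν (Ici y) < ∞) (hg : 0 < g) (hy : 0 < y) (hyg : y ≤ ν.tailInv g) :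
    ν (Ici y) = ENNReal.ofReal (g + (ν (Ico y (ν.tailInv g))).toReal) := by
  have hfin : ν (Ico y (ν.tailInv g)) ≠ ∞ :=
    ((measure_mono Ico_subset_Ici_self).trans_lt (hν_tail y hy)).ne
  have hdisj : Disjoint (Ico y (ν.tailInv g)) (Ici (ν.tailInv g)) :=
    (Iio_disjoint_Ici le_rfl).mono_left Ico_subset_Iio_self
  rw [← Ico_union_Ici_eq_Ici hyg, measure_union hdisj measurableSet_Ici,
    measure_Ici_tailInv hν_inf hν_tail hg, ofReal_add hg.le toReal_nonneg, ofReal_toReal hfin,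
    add_comm]

theorem toReal_measure_Ico_le_iff [NullSingletonClass ν] (hν_inf : ν (Ioi 0) = ∞)
    (hν_tail : ∀ y, 0 < y → ν (Ici y) < ∞) (hg : 0 < g) (hc : 0 ≤ c) (hy : 0 < y)
    (hyg : y ≤ ν.tailInv g) :
    (ν (Ico y (ν.tailInv g))).toReal ≤ c ↔ ν.tailInv (g + c) ≤ y := by
  rw [← measure_Ici_le_ofReal_iff hν_inf hν_tail (by positivity) hy,
    measure_Ici_eq_ofReal_add hν_inf hν_tail hg hy hyg, ofReal_le_ofReal_iff (by positivity),
    add_le_add_iff_left]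

theorem measure_Ico_tailInv_add [NullSingletonClass ν] (hν_inf : ν (Ioi 0) = ∞)
    (hν_tail : ∀ y, 0 < y → ν (Ici y) < ∞) (hg : 0 < g) (hc : 0 ≤ c) :
    ν (Ico (ν.tailInv (g + c)) (ν.tailInv g)) = ENNReal.ofReal c := by
  have hle : ν.tailInv (g + c) ≤ ν.tailInv g :=
    tailInv_antitoneOn hν_tail hg (show 0 < g + c by positivity) (le_add_of_nonneg_right hc)
  have hfin : ν (Ici (ν.tailInv g)) ≠ ∞ := by
    rw [measure_Ici_tailInv hν_inf hν_tail hg]; exact ofReal_ne_top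
  rw [← Ici_sdiff_Ici,
    measure_sdiff (Ici_subset_Ici.2 hle) measurableSet_Ici.nullMeasurableSet hfin,
    measure_Ici_tailInv hν_inf hν_tail hg, measure_Ici_tailInv hν_inf hν_tail (by positivity),
    ← ofReal_sub _ hg.le, add_sub_cancel_left]

theorem preimage_Iic_inter_Ioo_tailInv [NullSingletonClass ν] (hν_inf : ν (Ioi 0) = ∞)
    (hν_tail : ∀ y, 0 < y → ν (Ici y) < ∞) (hg : 0 < g) (hc : 0 ≤ c) :
    (fun y ↦ (ν (Ico y (ν.tailInv g))).toReal) ⁻¹' Iic c ∩ Ioo 0 (ν.tailInv g)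
      = Ico (ν.tailInv (g + c)) (ν.tailInv g) := by
  have hpos := tailInv_pos hν_inf hν_tail (show 0 < g + c by positivity)
  ext y
  simp only [mem_inter_iff, mem_preimage, mem_Iic, mem_Ioo, mem_Ico]
  refine ⟨fun ⟨h, hy, hyg⟩ ↦ ⟨?_, hyg⟩, fun ⟨h, hyg⟩ ↦ ⟨?_, hpos.trans_le h, hyg⟩⟩
  · exact (toReal_measure_Ico_le_iff hν_inf hν_tail hg hc hy hyg.le).1 h
  · exact (toReal_measure_Ico_le_iff hν_inf hν_tail hg hc (hpos.trans_le h) hyg.le).2 h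

theorem map_toReal_measure_Ico_tailInv [NullSingletonClass ν] (hν_inf : ν (Ioi 0) = ∞)
    (hν_tail : ∀ y, 0 < y → ν (Ici y) < ∞) (hg : 0 < g) :
    (ν.restrict (Ioo 0 (ν.tailInv g))).map (fun y ↦ (ν (Ico y (ν.tailInv g))).toReal)
      = volume.restrict (Ioi 0) := by
  have hφ := measurable_toReal_measure_Ico ν (ν.tailInv g)
  have hcdf : ∀ c, (ν.restrict (Ioo 0 (ν.tailInv g))).map
      (fun y ↦ (ν (Ico y (ν.tailInv g))).toReal) (Iic c) = ENNReal.ofReal c := by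
    intro c
    rw [map_apply hφ measurableSet_Iic, restrict_apply (hφ measurableSet_Iic)]
    rcases lt_or_ge c 0 with hc | hc
    · rw [ofReal_of_nonpos hc.le]
      exact measure_mono_null (fun y hy ↦ hc.not_ge (toReal_nonneg.trans hy.1)) measure_empty
    · rw [preimage_Iic_inter_Ioo_tailInv hν_inf hν_tail hg hc,
        measure_Ico_tailInv_add hν_inf hν_tail hg hc]
  refine ext_of_Iic_of_ne_top (fun c ↦ hcdf c ▸ ofReal_ne_top) fun c ↦ ?_
  rw [hcdf, restrict_apply measurableSet_Iic, Iic_inter_Ioi, Real.volume_Ioc, sub_zero]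

end Measure

end MeasureTheory

theorem inverse_levy_inductive_step_general
    (ν : Measure ℝ)
    (hν_atomless : ∀ x : ℝ, ν {x} = 0)
    (hν_inf : ν (Set.Ioi 0) = ⊤)
    (hν_tail : ∀ y : ℝ, 0 < y → ν (Set.Ici y) < ⊤)
    (νinv : ℝ → ℝ)
    (hνinv : ∀ x : ℝ, νinv x = sInf {y : ℝ | 0 < y ∧ ν (Set.Ici y) ≤ ENNReal.ofReal x})
    (g : ℝ) (hg : 0 < g)
    (f : ℝ → ℝ) (hf : Measurable f) :
    ∫ γ in Set.Ioi (0 : ℝ), f (νinv (g + γ)) * Real.exp (-γ)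
      = ∫ y in Set.Ioo 0 (νinv g), f y * Real.exp (-(ν (Set.Ico y (νinv g))).toReal) ∂ν := by
  obtain rfl : νinv = ν.tailInv := funext hνinv
  have : NullSingletonClass ν := ⟨hν_atomless⟩
  have hanti : AntitoneOn (fun γ ↦ ν.tailInv (g + γ)) (Ioi 0) := fun γ hγ γ' hγ' h ↦
    Measure.tailInv_antitoneOn hν_tail (add_pos hg hγ) (add_pos hg hγ') (by gcongr)
  have hF : AEStronglyMeasurable (fun γ ↦ f (ν.tailInv (g + γ)) * Real.exp (-γ))
      (volume.restrict (Ioi 0)) :=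
    ((hf.comp_aemeasurable (aemeasurable_restrict_of_antitoneOn measurableSet_Ioi
      hanti)).mul (by fun_prop)).aestronglyMeasurable
  rw [← Measure.map_toReal_measure_Ico_tailInv hν_inf hν_tail hg] at hF ⊢
  rw [integral_map (measurable_toReal_measure_Ico ν _).aemeasurable hF]
  refine integral_congr_ae ?_
  filter_upwards [ae_restrict_mem measurableSet_Ioo,
    ae_restrict_of_ae (Measure.ae_tailInv_eq hν_inf hν_tail)] with y hy hinv
  rw [hinv _ (by positivity) hy.1
    (Measure.measure_Ici_eq_ofReal_add hν_inf hν_tail hg hy.1 hy.2.le)]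

/-- Inductive step for the inverse Lévy representation: for every `g > 0`
and every bounded measurable `f`,
`∫_0^∞ f(ν←(g+γ)) e^{−γ} dγ = ∫_{(0,ν←(g))} f(y) exp(−ν([y, ν←(g)))) ν(dy)`. -/
theorem inverse_levy_inductive_step
    (ν : Measure ℝ) [SigmaFinite ν]
    (hν_atomless : ∀ x : ℝ, ν {x} = 0)
    (hν_supp : ν (Set.Iic 0) = 0)
    (hν_inf : ν (Set.Ioi 0) = ⊤)
    (hν_tail : ∀ y : ℝ, 0 < y → ν (Set.Ici y) < ⊤)
    (νinv : ℝ → ℝ)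
    (hνinv : ∀ x : ℝ, νinv x = sInf {y : ℝ | 0 < y ∧ ν (Set.Ici y) ≤ ENNReal.ofReal x})
    (g : ℝ) (hg : 0 < g)
    (f : ℝ → ℝ) (hf : Measurable f) (C : ℝ) (hfC : ∀ x, |f x| ≤ C) :
    ∫ γ in Set.Ioi (0 : ℝ), f (νinv (g + γ)) * Real.exp (-γ)
      = ∫ y in Set.Ioo 0 (νinv g), f y * Real.exp (-(ν (Set.Ico y (νinv g))).toReal) ∂ν :=
  inverse_levy_inductive_step_general ν hν_atomless hν_inf hν_tail νinv hνinv g hg f hf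
end

section
/- Let (p_j)_{j≥1} be a sequence of strictly positive reals with ∑_j p_j < ∞, and let (W_j)_{j≥1} be i.i.d. standard Gumbel random variables. Then almost surely the supremum sup_j (W_j + log p_j) is finite and attained at a unique index J; moreover, for every k ≥ 1, P(J = k) = p_k / ∑_j p_j. -/
/-!
Conditionally on `W k = t`, the probability that `W j + log p_j < W k + log p_k` for every `j` in a
finite set `F ∌ k` is, by independence and the Gumbel CDF `exp (-e^{-x})`, the product
`∏_{j ∈ F} exp (-(p_j / p_k) e^{-t}) = exp (-c e^{-t})` with `c = ∑_{j ∈ F} p_j / p_k`. Since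
`exp (-a e^{-t}) / a` is an antiderivative of `exp (-(t + a e^{-t}))`, integrating against the
Gumbel law gives `1 / (1 + c) = p_k / (p_k + ∑_{j ∈ F} p_j)`. Letting `F` exhaust `ℕ` yields
`p_k / ∑ p_j`; these probabilities of disjoint events sum to one, so almost surely some index is
the strict maximiser.
-/

open MeasureTheory

/-- The standard Gumbel distribution: the Borel probability measure on `ℝ` with density
`x ↦ exp(−(x + e^{−x}))` with respect to Lebesgue measure. -/
noncomputable def gumbelMeasure : Measure ℝ :=
  volume.withDensity fun x => ENNReal.ofReal (Real.exp (-(x + Real.exp (-x))))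

open Real Set Filter Topology Function ProbabilityTheory

theorem hasDerivAt_exp_neg_mul_exp_neg_div {a : ℝ} (ha : a ≠ 0) (t : ℝ) :
    HasDerivAt (fun t => exp (-(a * exp (-t))) / a) (exp (-(t + a * exp (-t)))) t := by
  have h : HasDerivAt (fun t => -(a * exp (-t))) (a * exp (-t)) t := by
    simpa [Pi.neg_def] using (((hasDerivAt_neg t).exp).const_mul a).neg
  refine (h.exp.div_const a).congr_deriv ?_
  rw [mul_div_assoc, mul_div_cancel_left₀ _ ha, ← exp_add]
  ring_nf

theorem tendsto_exp_neg_mul_exp_neg_atTop (a : ℝ) :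
    Tendsto (fun t => exp (-(a * exp (-t)))) atTop (𝓝 1) := by
  have h : Tendsto (fun t => -(a * exp (-t))) atTop (𝓝 0) := by
    simpa using ((tendsto_exp_atBot.comp tendsto_neg_atTop_atBot).const_mul a).neg
  simpa [Function.comp_def] using (continuous_exp.tendsto 0).comp h

theorem tendsto_exp_neg_mul_exp_neg_atBot {a : ℝ} (ha : 0 < a) :
    Tendsto (fun t => exp (-(a * exp (-t)))) atBot (𝓝 0) :=
  tendsto_exp_atBot.comp <| tendsto_neg_atTop_atBot.comp <|
    (tendsto_exp_atTop.comp tendsto_neg_atBot_atTop).const_mul_atTop ha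

theorem integrable_exp_neg_add_mul_exp_neg {a : ℝ} (ha : 0 < a) :
    Integrable fun t => exp (-(t + a * exp (-t))) := by
  have hcont : Continuous fun t => exp (-(t + a * exp (-t))) := by fun_prop
  refine integrable_of_intervalIntegral_norm_tendsto (1 / a) (fun i => hcont.integrableOn_Ioc)
    tendsto_neg_atTop_atBot tendsto_id ?_
  simp_rw [norm_of_nonneg (exp_pos _).le, intervalIntegral.integral_eq_sub_of_hasDerivAt
    (fun t _ => hasDerivAt_exp_neg_mul_exp_neg_div ha.ne' t) (hcont.intervalIntegrable _ _)]
  simpa using ((tendsto_exp_neg_mul_exp_neg_atTop a).div_const a).sub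
    (((tendsto_exp_neg_mul_exp_neg_atBot ha).comp tendsto_neg_atTop_atBot).div_const a)

theorem lintegral_exp_neg_add_mul_exp_neg {a : ℝ} (ha : 0 < a) :
    ∫⁻ t, ENNReal.ofReal (exp (-(t + a * exp (-t)))) = ENNReal.ofReal (1 / a) := by
  rw [← ofReal_integral_eq_lintegral_ofReal (integrable_exp_neg_add_mul_exp_neg ha)
    (.of_forall fun t => (exp_pos _).le)]
  simpa using congrArg ENNReal.ofReal <| integral_of_hasDerivAt_of_tendsto
    (hasDerivAt_exp_neg_mul_exp_neg_div ha.ne') (integrable_exp_neg_add_mul_exp_neg ha)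
    ((tendsto_exp_neg_mul_exp_neg_atBot ha).div_const a)
    ((tendsto_exp_neg_mul_exp_neg_atTop a).div_const a)

theorem setLIntegral_Iio_exp_neg_add_mul_exp_neg {a : ℝ} (ha : 0 < a) (b : ℝ) :
    ∫⁻ t in Iio b, ENNReal.ofReal (exp (-(t + a * exp (-t)))) =
      ENNReal.ofReal (exp (-(a * exp (-b))) / a) := by
  rw [← ofReal_integral_eq_lintegral_ofReal (integrable_exp_neg_add_mul_exp_neg ha).integrableOn
    (.of_forall fun t => (exp_pos _).le), ← integral_Iic_eq_integral_Iio]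
  simpa using congrArg ENNReal.ofReal <| integral_Iic_of_hasDerivAt_of_tendsto'
    (fun t _ => hasDerivAt_exp_neg_mul_exp_neg_div ha.ne' t)
    (integrable_exp_neg_add_mul_exp_neg ha).integrableOn
    ((tendsto_exp_neg_mul_exp_neg_atBot ha).div_const a)

instance isProbabilityMeasure_gumbelMeasure : IsProbabilityMeasure gumbelMeasure where
  measure_univ := by
    rw [gumbelMeasure, withDensity_apply _ .univ, Measure.restrict_univ]
    simpa using lintegral_exp_neg_add_mul_exp_neg one_pos

theorem gumbelMeasure_Iio (x : ℝ) :
    gumbelMeasure (Iio x) = ENNReal.ofReal (exp (-exp (-x))) := by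
  rw [gumbelMeasure, withDensity_apply _ measurableSet_Iio]
  simpa using setLIntegral_Iio_exp_neg_add_mul_exp_neg one_pos x

theorem lintegral_exp_neg_mul_exp_neg_gumbelMeasure {c : ℝ} (hc : 0 ≤ c) :
    ∫⁻ t, ENNReal.ofReal (exp (-(c * exp (-t)))) ∂gumbelMeasure =
      ENNReal.ofReal (1 / (1 + c)) := by
  rw [gumbelMeasure, lintegral_withDensity_eq_lintegral_mul _ (by fun_prop) (by fun_prop),
    ← lintegral_exp_neg_add_mul_exp_neg (by linarith : 0 < 1 + c)]
  congr 1 with t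
  rw [Pi.mul_apply, ← ENNReal.ofReal_mul (exp_pos _).le, ← exp_add]
  ring_nf

theorem ProbabilityTheory.IndepFun.measure_preimage_eq_lintegral {Ω β γ : Type*}
    [MeasurableSpace Ω] [MeasurableSpace β] [MeasurableSpace γ] {μ : Measure Ω}
    [IsFiniteMeasure μ] {X : Ω → β} {Y : Ω → γ} (hXY : IndepFun X Y μ) (hX : Measurable X)
    (hY : Measurable Y) {s : Set (β × γ)} (hs : MeasurableSet s) :
    μ ((fun ω => (X ω, Y ω)) ⁻¹' s) = ∫⁻ x, μ.map Y (Prod.mk x ⁻¹' s) ∂μ.map X := by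
  rw [← Measure.map_apply (hX.prodMk hY) hs,
    hXY.map_prod_eq_prod_map_map hX.aemeasurable hY.aemeasurable, Measure.prod_apply hs]

def IsStrictArgmax {ι α : Type*} [LT α] (x : ι → α) (k : ι) : Prop :=
  ∀ j, j ≠ k → x j < x k

theorem IsStrictArgmax.unique {ι α : Type*} [Preorder α] {x : ι → α} {k l : ι}
    (hk : IsStrictArgmax x k) (hl : IsStrictArgmax x l) : k = l := by
  by_contra hkl
  exact lt_asymm (hk l (Ne.symm hkl)) (hl k hkl)

theorem measurableSet_isStrictArgmax {Ω ι : Type*} [MeasurableSpace Ω] [Countable ι]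
    {X : ι → Ω → ℝ} (hX : ∀ i, Measurable (X i)) (k : ι) :
    MeasurableSet {ω | IsStrictArgmax (fun j => X j ω) k} :=
  measurableSet_setOfPred.2 <| Measurable.forall fun j =>
    measurable_const.imp <| measurableSet_setOfPred.1 <| measurableSet_lt (hX j) (hX k)

theorem ae_exists_mem_of_tsum_measure_eq_one {Ω ι : Type*} [MeasurableSpace Ω] [Countable ι]
    {μ : Measure Ω} [IsProbabilityMeasure μ] {A : ι → Set Ω} (hA : ∀ i, MeasurableSet (A i))
    (hdisj : Pairwise (Disjoint on A)) (h : ∑' i, μ (A i) = 1) :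
    ∀ᵐ ω ∂μ, ∃ i, ω ∈ A i := by
  have hfull : μ (⋃ i, A i) = μ univ := by rw [measure_iUnion hdisj hA, h, measure_univ]
  simpa using (ae_mem_iff_measure_eq (MeasurableSet.iUnion hA).nullMeasurableSet).2 hfull

section IidGumbel

variable {Ω ι : Type*} [MeasurableSpace Ω] {P : Measure Ω} {W : ι → Ω → ℝ} {p : ι → ℝ}

theorem measure_forall_add_log_lt (hWmeas : ∀ i, Measurable (W i)) (hWindep : iIndepFun W P)
    (hWlaw : ∀ i, P.map (W i) = gumbelMeasure) (hp : ∀ i, 0 < p i) (F : Finset ι) (s : ℝ) :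
    P {ω | ∀ j ∈ F, W j ω + log (p j) < s} =
      ENNReal.ofReal (exp (-((∑ j ∈ F, p j) * exp (-s)))) := by
  have hset : {ω | ∀ j ∈ F, W j ω + log (p j) < s} = ⋂ j ∈ F, W j ⁻¹' Iio (s - log (p j)) := by
    ext ω
    simp [lt_sub_iff_add_lt]
  have hmarginal (j : ι) : P (W j ⁻¹' Iio (s - log (p j))) =
      ENNReal.ofReal (exp (-(p j * exp (-s)))) := by
    rw [← Measure.map_apply (hWmeas j) measurableSet_Iio, hWlaw, gumbelMeasure_Iio, neg_sub,
      exp_sub, exp_log (hp j), exp_neg s, div_eq_mul_inv]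
  rw [hset, hWindep.meas_biInter fun j _ => ⟨_, measurableSet_Iio, rfl⟩,
    Finset.prod_congr rfl fun j _ => hmarginal j,
    ← ENNReal.ofReal_prod_of_nonneg fun j _ => (exp_pos _).le, ← exp_sum, Finset.sum_mul,
    ← Finset.sum_neg_distrib]

theorem measure_forall_add_log_lt_add_log (hWmeas : ∀ i, Measurable (W i))
    (hWindep : iIndepFun W P) (hWlaw : ∀ i, P.map (W i) = gumbelMeasure) (hp : ∀ i, 0 < p i)
    {k : ι} {F : Finset ι} (hkF : k ∉ F) :
    P {ω | ∀ j ∈ F, W j ω + log (p j) < W k ω + log (p k)} =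
      ENNReal.ofReal (p k / (p k + ∑ j ∈ F, p j)) := by
  have := hWindep.isProbabilityMeasure
  let WF : Ω → F → ℝ := fun ω j => W j ω
  have hWF : Measurable WF := measurable_pi_lambda _ fun j => hWmeas j
  have hindep : IndepFun (W k) WF P :=
    (hWindep.indepFun_finset {k} F (Finset.disjoint_singleton_left.2 hkF) hWmeas).comp
      (measurable_pi_apply (⟨k, Finset.mem_singleton_self k⟩ : ({k} : Finset ι))) measurable_id
  let E : Set (ℝ × (F → ℝ)) := {q | ∀ j : F, q.2 j + log (p j) < q.1 + log (p k)}
  have hE : MeasurableSet E := by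
    simp only [E, ofPred_forall]
    exact .iInter fun j => measurableSet_lt (by fun_prop) (by fun_prop)
  have hsection (t : ℝ) : P.map WF (Prod.mk t ⁻¹' E) =
      ENNReal.ofReal (exp (-((∑ j ∈ F, p j) / p k * exp (-t)))) := by
    have hpre : WF ⁻¹' (Prod.mk t ⁻¹' E) =
        {ω | ∀ j ∈ F, W j ω + log (p j) < t + log (p k)} := by
      ext ω
      simp [E, WF]
    rw [Measure.map_apply hWF (measurable_prodMk_left hE), hpre,
      measure_forall_add_log_lt hWmeas hWindep hWlaw hp, neg_add, exp_add, exp_neg (log _),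
      exp_log (hp k)]
    ring_nf
  have hQ : 0 ≤ (∑ j ∈ F, p j) / p k :=
    div_nonneg (Finset.sum_nonneg fun j _ => (hp j).le) (hp k).le
  calc P {ω | ∀ j ∈ F, W j ω + log (p j) < W k ω + log (p k)}
      = P ((fun ω => (W k ω, WF ω)) ⁻¹' E) := by
        congr 1
        ext ω
        simp [E, WF]
    _ = ∫⁻ t, ENNReal.ofReal (exp (-((∑ j ∈ F, p j) / p k * exp (-t)))) ∂gumbelMeasure := by
        rw [hindep.measure_preimage_eq_lintegral (hWmeas k) hWF hE, hWlaw]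
        exact lintegral_congr hsection
    _ = ENNReal.ofReal (p k / (p k + ∑ j ∈ F, p j)) := by
        rw [lintegral_exp_neg_mul_exp_neg_gumbelMeasure hQ, one_add_div (hp k).ne', one_div_div]

end IidGumbel

section IidGumbelNat

variable {Ω : Type*} [MeasurableSpace Ω] {P : Measure Ω} {W : ℕ → Ω → ℝ} {p : ℕ → ℝ}

theorem measure_isStrictArgmax_add_log (hWmeas : ∀ i, Measurable (W i))
    (hWindep : iIndepFun W P) (hWlaw : ∀ i, P.map (W i) = gumbelMeasure) (hp : ∀ i, 0 < p i)
    (hsum : Summable p) (k : ℕ) :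
    P {ω | IsStrictArgmax (fun j => W j ω + log (p j)) k} =
      ENNReal.ofReal (p k / ∑' j, p j) := by
  let B : ℕ → Set Ω := fun n =>
    {ω | ∀ j ∈ (Finset.range n).erase k, W j ω + log (p j) < W k ω + log (p k)}
  have hB : Antitone B := fun m n hmn ω hω j hj =>
    hω j (Finset.erase_subset_erase k (Finset.range_subset_range.2 hmn) hj)
  have hinter : {ω | IsStrictArgmax (fun j => W j ω + log (p j)) k} = ⋂ n, B n := by
    ext ω
    simp only [IsStrictArgmax, B, mem_ofPred, mem_iInter, Finset.mem_erase, Finset.mem_range]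
    exact ⟨fun h n j hj => h j hj.1, fun h j hj => h (j + 1) j ⟨hj, j.lt_succ_self⟩⟩
  have hBmeas (n : ℕ) : MeasurableSet (B n) :=
    measurableSet_setOfPred.2 <| Measurable.forall fun j => measurable_const.imp <|
      measurableSet_setOfPred.1 <| measurableSet_lt (by fun_prop) (by fun_prop)
  have hlim : Tendsto (fun n => P (B n)) atTop (𝓝 (ENNReal.ofReal (p k / ∑' j, p j))) := by
    have hpartial : Tendsto (fun n => p k + ∑ j ∈ (Finset.range n).erase k, p j) atTop
        (𝓝 (∑' j, p j)) := by
      refine hsum.hasSum.tendsto_sum_nat.congr' ?_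
      filter_upwards [eventually_gt_atTop k] with n hn
      exact (Finset.add_sum_erase _ p (Finset.mem_range.2 hn)).symm
    simp_rw [B, measure_forall_add_log_lt_add_log hWmeas hWindep hWlaw hp
      (Finset.notMem_erase k _)]
    exact ENNReal.tendsto_ofReal <| tendsto_const_nhds.div hpartial
      (hsum.tsum_pos (fun j => (hp j).le) k (hp k)).ne'
  have := hWindep.isProbabilityMeasure
  rw [hinter]
  exact tendsto_nhds_unique (tendsto_measure_iInter_atTop
    (fun n => (hBmeas n).nullMeasurableSet) hB ⟨0, measure_ne_top P _⟩) hlim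

end IidGumbelNat

theorem gumbel_max_sampling_general
    {Ω : Type*} [MeasurableSpace Ω] (P : Measure Ω)
    (W : ℕ → Ω → ℝ) (hWmeas : ∀ k, Measurable (W k))
    (hWindep : ProbabilityTheory.iIndepFun W P)
    (hWlaw : ∀ k, Measure.map (W k) P = gumbelMeasure)
    (p : ℕ → ℝ) (hp : ∀ j, 0 < p j) (hsum : Summable p) :
    (∀ᵐ ω ∂P, ∃! J : ℕ, ∀ j : ℕ, j ≠ J →
        W j ω + Real.log (p j) < W J ω + Real.log (p J)) ∧
      ∀ k : ℕ,
        P {ω | ∀ j : ℕ, j ≠ k → W j ω + Real.log (p j) < W k ω + Real.log (p k)}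
          = ENNReal.ofReal (p k / ∑' j, p j) := by
  have hlaw := measure_isStrictArgmax_add_log hWmeas hWindep hWlaw hp hsum
  have := hWindep.isProbabilityMeasure
  have htotal : ∑' k, P {ω | IsStrictArgmax (fun j => W j ω + log (p j)) k} = 1 := by
    have hS : 0 < ∑' j, p j := hsum.tsum_pos (fun j => (hp j).le) 0 (hp 0)
    rw [tsum_congr hlaw, ← ENNReal.ofReal_tsum_of_nonneg (fun k => div_nonneg (hp k).le hS.le)
      (hsum.div_const _), tsum_div_const, div_self hS.ne', ENNReal.ofReal_one]
  refine ⟨?_, hlaw⟩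
  filter_upwards [ae_exists_mem_of_tsum_measure_eq_one
    (measurableSet_isStrictArgmax fun j => (hWmeas j).add_const _)
    (fun k l hkl => disjoint_left.2 fun ω hk hl => hkl (IsStrictArgmax.unique hk hl)) htotal]
    with ω ⟨k, hk⟩
  exact ⟨k, hk, fun l hl => IsStrictArgmax.unique hl hk⟩

/-- (Infinite Gumbel-max sampling lemma.)  If `(p_j)` are strictly
positive with `∑_j p_j < ∞` and `(W_j)` are i.i.d. standard Gumbel, then almost surely
`sup_j (W_j + log p_j)` is attained at a unique index `J`, and `P(J = k) = p_k / ∑_j p_j`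
for every `k`. -/
theorem gumbel_max_sampling
    {Ω : Type*} [MeasurableSpace Ω] (P : Measure Ω) [IsProbabilityMeasure P]
    (W : ℕ → Ω → ℝ) (hWmeas : ∀ k, Measurable (W k))
    (hWindep : ProbabilityTheory.iIndepFun W P)
    (hWlaw : ∀ k, Measure.map (W k) P = gumbelMeasure)
    (p : ℕ → ℝ) (hp : ∀ j, 0 < p j) (hsum : Summable p) :
    (∀ᵐ ω ∂P, ∃! J : ℕ, ∀ j : ℕ, j ≠ J →
        W j ω + Real.log (p j) < W J ω + Real.log (p J)) ∧
      ∀ k : ℕ,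
        P {ω | ∀ j : ℕ, j ≠ k → W j ω + Real.log (p j) < W k ω + Real.log (p k)}
          = ENNReal.ofReal (p k / ∑' j, p j) :=
  gumbel_max_sampling_general P W hWmeas hWindep hWlaw p hp hsum
end

section
/- Let (p_j)_{j≥1} be a nonincreasing sequence of strictly positive reals with ∑_j p_j = 1, and let 1 ≤ d ≤ K be integers. Let D be the set of d-tuples of pairwise distinct positive integers, W = ∑_{(j_1,…,j_d)∈D} ∏_{i=1}^d p_{j_i} (which is strictly positive), and let q be the probability mass function on D given by q(j_1,…,j_d) = (∏_{i=1}^d p_{j_i}) / W, i.e. the law of d i.i.d. Categorical(p) draws conditioned to be pairwise distinct. Then q({(j_1,…,j_d) ∈ D : max_i j_i ≤ K}) ≥ ((∑_{j=d}^K p_j) / (1 − ∑_{j=1}^{d−1} p_j))^d. -/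
/-!
Work with unnormalised weights `q` and write `W_m(A)` for the total weight `∑ ∏ᵢ q (v i)` of the
injective `m`-tuples with entries in `A`; put `T = ∑_{a ≤ j < K} q j` and `U = ∑_{j ≥ K} q j`.
Splitting on the first entry gives `W_{m+1}(A) ≤ ∑_{j ∈ A, j < K} q j · W_m(A \ {j}) + U · W_m(A)`.
Since `q` is antitone, removing at most `a` points from `[0, K)` leaves mass at least `T`, so
appending one more entry below `K` gives `T · W_m(A ∩ [0, K)) ≤ W_{m+1}(A ∩ [0, K))` while
`m ≤ a`. Induction on `m` then yields `W_m(A) · T^m ≤ W_m(A ∩ [0, K)) · (T + U)^m` for `m ≤ a + 1`,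
and with `A = ℕ`, `m = d`, `a = d - 1` one has `T + U = 1 - ∑_{j < d - 1} p j`.
-/

open Function
open scoped ENNReal

section InjectiveTuples

variable {α : Type*}

def injTuples (m : ℕ) (A : Set α) : Set (Fin m → α) :=
  {v | Injective v ∧ ∀ i, v i ∈ A}

noncomputable def injMass (q : α → ℝ≥0∞) (m : ℕ) (A : Set α) : ℝ≥0∞ :=
  ∑' v : injTuples m A, ∏ i, q (v.1 i)

theorem cons_mem_injTuples {m : ℕ} {A : Set α} {j : α} {w : Fin m → α} :
    (Fin.cons j w : Fin (m + 1) → α) ∈ injTuples (m + 1) A ↔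
      j ∈ A ∧ w ∈ injTuples m (A \ {j}) := by
  simp only [injTuples, Set.mem_ofPred_eq, Fin.cons_injective_iff, Fin.forall_fin_succ,
    Fin.cons_zero, Fin.cons_succ, Set.mem_sdiff, Set.mem_singleton_iff, Set.mem_range, not_exists]
  grind

theorem injMass_eq_tsum_indicator (q : α → ℝ≥0∞) (m : ℕ) (A : Set α) :
    injMass q m A = ∑' v, (injTuples m A).indicator (fun v => ∏ i, q (v i)) v :=
  tsum_subtype (injTuples m A) fun v => ∏ i, q (v i)

theorem injMass_zero (q : α → ℝ≥0∞) (A : Set α) : injMass q 0 A = 1 := by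
  have : Unique (injTuples 0 A) :=
    ⟨⟨⟨finZeroElim, injective_of_subsingleton _, finZeroElim⟩⟩,
      fun v => Subtype.ext (funext finZeroElim)⟩
  simp [injMass]

theorem injMass_succ (q : α → ℝ≥0∞) (m : ℕ) (A : Set α) :
    injMass q (m + 1) A = ∑' j, A.indicator (fun j => q j * injMass q m (A \ {j})) j := by
  classical
  rw [injMass_eq_tsum_indicator, ← (Fin.consEquiv fun _ => α).tsum_eq, ENNReal.tsum_prod']
  refine tsum_congr fun j => ?_
  by_cases hj : j ∈ A
  · rw [Set.indicator_of_mem hj, injMass_eq_tsum_indicator, ← ENNReal.tsum_mul_left]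
    refine tsum_congr fun w => ?_
    change (injTuples _ A).indicator _ (Fin.cons j w) = _
    simp only [Set.indicator_apply, cons_mem_injTuples, hj, true_and, Fin.prod_univ_succ,
      Fin.cons_zero, Fin.cons_succ, mul_ite, mul_zero]
  · rw [Set.indicator_of_notMem hj]
    refine ENNReal.tsum_eq_zero.2 fun w => ?_
    change (injTuples _ A).indicator _ (Fin.cons j w) = _
    simp [cons_mem_injTuples, hj]

theorem injTuples_mono {m : ℕ} {A A' : Set α} (h : A ⊆ A') : injTuples m A ⊆ injTuples m A' :=
  fun _ hv => ⟨hv.1, fun i => h (hv.2 i)⟩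

theorem injMass_mono (q : α → ℝ≥0∞) (m : ℕ) {A A' : Set α} (h : A ⊆ A') :
    injMass q m A ≤ injMass q m A' := by
  rw [injMass_eq_tsum_indicator, injMass_eq_tsum_indicator]
  exact ENNReal.tsum_le_tsum
    (Set.indicator_le_indicator_of_subset (injTuples_mono h) fun _ => zero_le)

theorem injMass_le_pow_tsum (q : α → ℝ≥0∞) (m : ℕ) (A : Set α) :
    injMass q m A ≤ (∑' j, q j) ^ m := by
  induction m generalizing A with
  | zero => rw [injMass_zero, pow_zero]
  | succ m ih =>
    rw [injMass_succ, pow_succ', ← ENNReal.tsum_mul_right]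
    refine ENNReal.tsum_le_tsum fun j => (Set.indicator_le_self _ _ j).trans ?_
    gcongr
    exact ih _

theorem injMass_ne_top {q : α → ℝ≥0∞} (hq : ∑' j, q j ≠ ∞) (m : ℕ) (A : Set α) :
    injMass q m A ≠ ∞ :=
  ne_top_of_le_ne_top (ENNReal.pow_ne_top hq) (injMass_le_pow_tsum q m A)

theorem injMass_univ_ne_zero [Infinite α] {q : α → ℝ≥0∞} (hq : ∀ j, q j ≠ 0) (m : ℕ) :
    injMass q m Set.univ ≠ 0 := by
  let e : Fin m ↪ α := Fin.valEmbedding.trans (Infinite.natEmbedding α)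
  refine (ENNReal.le_tsum (⟨e, e.injective, fun _ => trivial⟩ :
    injTuples m Set.univ)).trans_lt' ?_ |>.ne'
  exact pos_iff_ne_zero.2 (Finset.prod_ne_zero_iff.2 fun i _ => hq _)

theorem sdiff_coe_insert [DecidableEq α] (A : Set α) (j : α) (F : Finset α) :
    A \ ↑(insert j F) = (A \ {j}) \ ↑F := by
  rw [Finset.coe_insert, Set.insert_eq, Set.sdiff_sdiff]

theorem mul_injMass_le_injMass_succ [DecidableEq α] {q : α → ℝ≥0∞} {T : ℝ≥0∞} {m : ℕ}
    {A : Set α}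
    (hT : ∀ F : Finset α, F.card ≤ m → T ≤ ∑' j, (A \ F).indicator q j) :
    T * injMass q m A ≤ injMass q (m + 1) A := by
  induction m generalizing A with
  | zero => simpa [injMass_zero, injMass_succ] using hT ∅ le_rfl
  | succ m ih =>
    rw [injMass_succ q (m + 1), injMass_succ, ← ENNReal.tsum_mul_left]
    refine ENNReal.tsum_le_tsum fun j => ?_
    by_cases hj : j ∈ A
    · simp only [Set.indicator_of_mem hj]
      rw [mul_left_comm]
      gcongr
      refine ih fun F hF => ?_
      rw [← sdiff_coe_insert]
      exact hT _ ((Finset.card_insert_le j F).trans (by omega))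
    · simp [Set.indicator_of_notMem hj]

theorem injMass_succ_le_inter_add_compl (q : α → ℝ≥0∞) (m : ℕ) (A B : Set α) :
    injMass q (m + 1) A ≤ ∑' j, (A ∩ B).indicator (fun j => q j * injMass q m (A \ {j})) j
      + (∑' j, Bᶜ.indicator q j) * injMass q m A := by
  rw [injMass_succ, ← ENNReal.tsum_mul_right, ← ENNReal.tsum_add]
  refine ENNReal.tsum_le_tsum fun j => ?_
  by_cases hjA : j ∈ A
  · by_cases hjB : j ∈ B
    · simp [hjA, hjB]
    · simp only [Set.indicator_of_mem hjA, Set.indicator_of_mem (Set.mem_compl hjB),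
        Set.indicator_of_notMem (fun h : j ∈ A ∩ B => hjB h.2), zero_add]
      gcongr
      exact injMass_mono q m Set.sdiff_subset
  · simp [hjA]

theorem injMass_mul_pow_le_injMass_inter_mul_pow [DecidableEq α] (q : α → ℝ≥0∞) (B : Set α)
    (T : ℝ≥0∞) (m : ℕ) (A : Set α)
    (hT : ∀ F : Finset α, F.card < m → T ≤ ∑' j, ((A ∩ B) \ F).indicator q j) :
    injMass q m A * T ^ m ≤ injMass q m (A ∩ B) * (T + ∑' j, Bᶜ.indicator q j) ^ m := by
  set U := ∑' j, Bᶜ.indicator q j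
  induction m generalizing A with
  | zero => simp [injMass_zero]
  | succ m ih =>
    set S := ∑' j, (A ∩ B).indicator (fun j => q j * injMass q m (A \ {j})) j with hS
    have hfirst : S * T ^ m ≤ injMass q (m + 1) (A ∩ B) * (T + U) ^ m := by
      rw [hS, injMass_succ, ← ENNReal.tsum_mul_right, ← ENNReal.tsum_mul_right]
      refine ENNReal.tsum_le_tsum fun j => ?_
      by_cases hj : j ∈ A ∩ B
      · simp only [Set.indicator_of_mem hj, mul_assoc]
        gcongr q j * ?_
        have hAB : (A \ {j}) ∩ B = (A ∩ B) \ {j} := Set.inter_sdiff_right_comm.symm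
        rw [← hAB]
        refine ih _ fun F hF => ?_
        rw [hAB, ← sdiff_coe_insert]
        exact hT _ ((Finset.card_insert_le j F).trans_lt (by omega))
      · simp [Set.indicator_of_notMem hj]
    have hind : injMass q m A * T ^ m ≤ injMass q m (A ∩ B) * (T + U) ^ m :=
      ih A fun F hF => hT F (by omega)
    have hsecond : T * injMass q m (A ∩ B) ≤ injMass q (m + 1) (A ∩ B) :=
      mul_injMass_le_injMass_succ fun F hF => hT F (by omega)
    calc injMass q (m + 1) A * T ^ (m + 1)
        ≤ (S + U * injMass q m A) * T ^ (m + 1) := by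
          gcongr
          exact injMass_succ_le_inter_add_compl q m A B
      _ = S * T ^ m * T + U * (injMass q m A * T ^ m) * T := by ring
      _ ≤ injMass q (m + 1) (A ∩ B) * (T + U) ^ m * T
            + U * (injMass q m (A ∩ B) * (T + U) ^ m) * T := by gcongr
      _ = injMass q (m + 1) (A ∩ B) * (T + U) ^ m * T
            + U * (T * injMass q m (A ∩ B)) * (T + U) ^ m := by ring
      _ ≤ injMass q (m + 1) (A ∩ B) * (T + U) ^ m * T
            + U * injMass q (m + 1) (A ∩ B) * (T + U) ^ m := by gcongr
      _ = injMass q (m + 1) (A ∩ B) * (T + U) ^ (m + 1) := by ring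

theorem tsum_prod_eq_toReal_injMass {p : α → ℝ} (hp : ∀ j, 0 ≤ p j) (m : ℕ) (A : Set α) :
    ∑' v : injTuples m A, ∏ i, p (v.1 i)
      = (injMass (fun j => ENNReal.ofReal (p j)) m A).toReal := by
  rw [injMass, ENNReal.tsum_toReal_eq fun v => ENNReal.prod_ne_top fun i _ => ENNReal.ofReal_ne_top]
  simp only [ENNReal.toReal_prod, ENNReal.toReal_ofReal (hp _)]

theorem tsum_injective_prod_eq_toReal_injMass_univ {p : α → ℝ} (hp : ∀ j, 0 ≤ p j) (m : ℕ) :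
    ∑' v : {v : Fin m → α // Injective v}, ∏ i, p (v.1 i)
      = (injMass (fun j => ENNReal.ofReal (p j)) m Set.univ).toReal := by
  rw [← tsum_prod_eq_toReal_injMass hp]
  exact (Equiv.subtypeEquivRight (p := fun v : Fin m → α => Injective v)
    (q := (· ∈ injTuples m Set.univ)) fun v => by simp [injTuples]).tsum_eq
    fun v : injTuples m Set.univ => ∏ i, p (v.1 i)

end InjectiveTuples

theorem card_Ico_inter_le_card_range_sdiff {a K : ℕ} {F : Finset ℕ} (hF : F.card ≤ a) :
    (Finset.Ico a K ∩ F).card ≤ (Finset.range a \ F).card := by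
  have hdisj : Disjoint (Finset.Ico a K ∩ F) (Finset.range a ∩ F) := by
    rw [Finset.disjoint_left]
    intro x hx hx'
    simp only [Finset.mem_inter, Finset.mem_Ico, Finset.mem_range] at hx hx'
    omega
  have hsub : (Finset.Ico a K ∩ F ∪ Finset.range a ∩ F).card ≤ F.card :=
    Finset.card_le_card (Finset.union_subset Finset.inter_subset_right Finset.inter_subset_right)
  rw [Finset.card_union_of_disjoint hdisj] at hsub
  have := Finset.card_sdiff_add_card_inter (Finset.range a) F
  rw [Finset.card_range] at this
  omega

theorem Antitone.sum_Ico_le_sum_range_sdiff {M : Type*} [AddCommMonoid M] [PartialOrder M]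
    [IsOrderedAddMonoid M] [CanonicallyOrderedAdd M] {f : ℕ → M} (hf : Antitone f) {a K : ℕ}
    (haK : a ≤ K) {F : Finset ℕ} (hF : F.card ≤ a) :
    ∑ j ∈ Finset.Ico a K, f j ≤ ∑ j ∈ Finset.range K \ F, f j := by
  have hlow : ∑ j ∈ Finset.Ico a K ∩ F, f j ≤ ∑ j ∈ Finset.range a \ F, f j :=
    calc ∑ j ∈ Finset.Ico a K ∩ F, f j
        ≤ (Finset.Ico a K ∩ F).card • f a := Finset.sum_le_card_nsmul _ _ _ fun j hj =>
          hf (Finset.mem_Ico.1 (Finset.mem_inter.1 hj).1).1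
      _ ≤ (Finset.range a \ F).card • f a :=
          nsmul_le_nsmul_left zero_le (card_Ico_inter_le_card_range_sdiff hF)
      _ ≤ ∑ j ∈ Finset.range a \ F, f j := Finset.card_nsmul_le_sum _ _ _ fun j hj =>
          hf (Finset.mem_range.1 (Finset.mem_sdiff.1 hj).1).le
  have hsplit : Finset.range K \ F = (Finset.Ico a K \ F) ∪ (Finset.range a \ F) := by
    ext j
    simp only [Finset.mem_sdiff, Finset.mem_union, Finset.mem_Ico, Finset.mem_range]
    grind
  have hdisj : Disjoint (Finset.Ico a K \ F) (Finset.range a \ F) := by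
    rw [Finset.disjoint_left]
    intro j hj hj'
    simp only [Finset.mem_sdiff, Finset.mem_Ico, Finset.mem_range] at hj hj'
    omega
  rw [hsplit, Finset.sum_union hdisj, ← Finset.sum_inter_add_sum_sdiff (Finset.Ico a K) F,
    add_comm]
  gcongr

theorem sum_range_add_sum_Ico_add_tsum_indicator_compl (f : ℕ → ℝ≥0∞) {a K : ℕ} (h : a ≤ K) :
    ∑ j ∈ Finset.range a, f j + (∑ j ∈ Finset.Ico a K, f j + ∑' j, (Set.Iio K)ᶜ.indicator f j)
      = ∑' j, f j := by
  rw [← add_assoc, Finset.sum_range_add_sum_Ico _ h, ← Finset.coe_range, ← tsum_subtype,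
    ENNReal.sum_add_tsum_compl]

theorem Antitone.injMass_univ_mul_pow_le {q : ℕ → ℝ≥0∞} (hq : Antitone q) {a d K : ℕ}
    (hda : d ≤ a + 1) (haK : a ≤ K) :
    injMass q d Set.univ * (∑ j ∈ Finset.Ico a K, q j) ^ d
      ≤ injMass q d (Set.Iio K)
          * (∑ j ∈ Finset.Ico a K, q j + ∑' j, (Set.Iio K)ᶜ.indicator q j) ^ d := by
  simpa only [Set.univ_inter] using
    injMass_mul_pow_le_injMass_inter_mul_pow q (Set.Iio K) _ d Set.univ fun F hF => by
      rw [Set.univ_inter, ← Finset.coe_range, ← Finset.coe_sdiff, ← sum_eq_tsum_indicator]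
      exact hq.sum_Ico_le_sum_range_sdiff haK (by omega)

theorem sum_Ico_ofReal_add_tsum_indicator_compl {p : ℕ → ℝ} (hp : ∀ j, 0 ≤ p j)
    (hsum : Summable p) {a K : ℕ} (h : a ≤ K) :
    ∑ j ∈ Finset.Ico a K, ENNReal.ofReal (p j)
        + ∑' j, (Set.Iio K)ᶜ.indicator (fun j => ENNReal.ofReal (p j)) j
      = ENNReal.ofReal (∑' j, p j - ∑ j ∈ Finset.range a, p j) := by
  have hsplit := sum_range_add_sum_Ico_add_tsum_indicator_compl (fun j => ENNReal.ofReal (p j)) h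
  rw [← ENNReal.ofReal_tsum_of_nonneg hp hsum, add_comm] at hsplit
  rw [ENNReal.ofReal_sub _ (Finset.sum_nonneg fun j _ => hp j),
    ENNReal.ofReal_sum_of_nonneg fun j _ => hp j]
  exact ENNReal.eq_sub_of_add_eq' ENNReal.ofReal_ne_top hsplit

theorem categorical_distinct_truncation_bound_general
    (p : ℕ → ℝ) (hpos : ∀ j, 0 < p j) (hmono : Antitone p)
    (hsum : Summable p) (hnorm : ∑' j, p j = 1)
    (d K : ℕ) (hdK : d ≤ K) :
    0 < (∑' v : {v : Fin d → ℕ // Function.Injective v}, ∏ i, p (v.1 i)) ∧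
      ((∑ j ∈ Finset.Ico (d - 1) K, p j) / (1 - ∑ j ∈ Finset.range (d - 1), p j)) ^ d
        ≤ ∑' v : {v : Fin d → ℕ // Function.Injective v ∧ ∀ i, v i < K},
            (∏ i, p (v.1 i)) /
              ∑' w : {w : Fin d → ℕ // Function.Injective w}, ∏ i, p (w.1 i) := by
  set q : ℕ → ℝ≥0∞ := fun j => ENNReal.ofReal (p j)
  have hp : ∀ j, 0 ≤ p j := fun j => (hpos j).le
  have hq : Antitone q := fun _ _ h => ENNReal.ofReal_le_ofReal (hmono h)
  have hq_fin : ∑' j, q j ≠ ∞ := ENNReal.ofReal_tsum_of_nonneg hp hsum ▸ ENNReal.ofReal_ne_top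
  have hrest : 0 < 1 - ∑ j ∈ Finset.range (d - 1), p j := by
    rw [← hnorm, ← hsum.sum_add_tsum_nat_add (d - 1), add_sub_cancel_left]
    exact ((summable_nat_add_iff _).2 hsum).tsum_pos (fun j => hp _) 0 (hpos _)
  have hmain := hq.injMass_univ_mul_pow_le (a := d - 1) (d := d) (K := K) (by omega) (by omega)
  rw [sum_Ico_ofReal_add_tsum_indicator_compl hp hsum (by omega), hnorm,
    ← ENNReal.ofReal_sum_of_nonneg fun j _ => hp j] at hmain
  have hN : ∑' v : {v : Fin d → ℕ // Injective v ∧ ∀ i, v i < K}, ∏ i, p (v.1 i)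
      = (injMass q d (Set.Iio K)).toReal := tsum_prod_eq_toReal_injMass hp d (Set.Iio K)
  have hW_pos : 0 < (injMass q d Set.univ).toReal := ENNReal.toReal_pos
    (injMass_univ_ne_zero (fun j => (ENNReal.ofReal_pos.2 (hpos j)).ne') d)
    (injMass_ne_top hq_fin d _)
  rw [tsum_injective_prod_eq_toReal_injMass_univ hp]
  refine ⟨hW_pos, ?_⟩
  rw [tsum_div_const, hN, div_pow, div_le_div_iff₀ (pow_pos hrest d) hW_pos]
  have := ENNReal.toReal_mono (ENNReal.mul_ne_top (injMass_ne_top hq_fin d _)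
    (ENNReal.pow_ne_top ENNReal.ofReal_ne_top)) hmain
  simpa only [ENNReal.toReal_mul, ENNReal.toReal_pow, ENNReal.toReal_ofReal hrest.le,
    ENNReal.toReal_ofReal (Finset.sum_nonneg fun j _ => hp j), mul_comm] using this

/-- Let `(p_j)` be a nonincreasing strictly positive probability vector,
`1 ≤ d ≤ K`, and `q` the law of `d` i.i.d. `Categorical(p)` draws conditioned to be
pairwise distinct (with normalizer `W`).  Then the `q`-probability that all `d` sampled
indices lie among the first `K` is at least `((∑_{j=d}^K p_j)/(1 − ∑_{j=1}^{d−1} p_j))^d`.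
(Indices are 0-based: `p j` represents `p_{j+1}`, so "index ≤ K" reads `v i < K`,
`∑_{j=d}^K p_j = ∑_{j ∈ [d−1, K)} p j` and `∑_{j=1}^{d−1} p_j = ∑_{j < d−1} p j`.) -/
theorem categorical_distinct_truncation_bound
    (p : ℕ → ℝ) (hpos : ∀ j, 0 < p j) (hmono : Antitone p)
    (hsum : Summable p) (hnorm : ∑' j, p j = 1)
    (d K : ℕ) (hd : 1 ≤ d) (hdK : d ≤ K) :
    0 < (∑' v : {v : Fin d → ℕ // Function.Injective v}, ∏ i, p (v.1 i)) ∧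
      ((∑ j ∈ Finset.Ico (d - 1) K, p j) / (1 - ∑ j ∈ Finset.range (d - 1), p j)) ^ d
        ≤ ∑' v : {v : Fin d → ℕ // Function.Injective v ∧ ∀ i, v i < K},
            (∏ i, p (v.1 i)) /
              ∑' w : {w : Fin d → ℕ // Function.Injective w}, ∏ i, p (w.1 i) :=
  categorical_distinct_truncation_bound_general p hpos hmono hsum hnorm d K hdK
end

section
/- Under hypotheses (i)–(iii), the total variation distance between Π̂ and Π satisfies (1/2)·∫ |p(x)/Z − p̂(x)/Ẑ| μ₀(dx) ≤ 3(ε + η)/2 − ε·η. -/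
open MeasureTheory

/-!
Since `p ≤ p̂`, the normalised densities differ by at most `p (1/Z - 1/Ẑ) + (p̂ - p)/Ẑ`
pointwise, so the total variation distance is at most `1 - Z/Ẑ`. On `A` the density `p`
retains a fraction `1 - ε` of `p̂`, and `A` carries a fraction `1 - η` of `Ẑ`, hence
`Z ≥ (1 - ε)(1 - η) Ẑ` and the distance is at most `ε + η - εη`.
-/

lemma abs_div_sub_div_le {a b Z Zh : ℝ} (ha : 0 ≤ a) (hab : a ≤ b) (hZ : 0 < Z) (hZZh : Z ≤ Zh) :
    |a / Z - b / Zh| ≤ a * (1 / Z - 1 / Zh) + (b - a) / Zh := by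
  have hZh : 0 < Zh := hZ.trans_le hZZh
  have hinv : 1 / Zh ≤ 1 / Z := one_div_le_one_div_of_le hZ hZZh
  have hsplit : a / Z - b / Zh = a * (1 / Z - 1 / Zh) - (b - a) / Zh := by
    field_simp
    ring
  have hfirst : 0 ≤ a * (1 / Z - 1 / Zh) := mul_nonneg ha (sub_nonneg.2 hinv)
  have hsecond : 0 ≤ (b - a) / Zh := div_nonneg (sub_nonneg.2 hab) hZh.le
  rw [hsplit, abs_le]
  constructor <;> linarith

section

variable {X : Type*} [MeasurableSpace X] {μ : Measure X} {f g : X → ℝ}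

theorem integral_abs_div_integral_sub_div_integral_le (hf0 : 0 ≤ᵐ[μ] f) (hfg : f ≤ᵐ[μ] g)
    (hf : Integrable f μ) (hg : Integrable g μ) (hZ : 0 < ∫ x, f x ∂μ) :
    ∫ x, |f x / ∫ y, f y ∂μ - g x / ∫ y, g y ∂μ| ∂μ
      ≤ 2 * (1 - (∫ x, f x ∂μ) / ∫ x, g x ∂μ) := by
  set Z := ∫ y, f y ∂μ
  set Zh := ∫ y, g y ∂μ
  have hZZh : Z ≤ Zh := integral_mono_ae hf hg hfg
  have hZh : 0 < Zh := hZ.trans_le hZZh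
  have hgap : Integrable (fun x => (g x - f x) / Zh) μ := (hg.sub hf).div_const Zh
  calc ∫ x, |f x / Z - g x / Zh| ∂μ
      ≤ ∫ x, (f x * (1 / Z - 1 / Zh) + (g x - f x) / Zh) ∂μ := by
        refine integral_mono_ae ((hf.div_const Z).sub (hg.div_const Zh)).abs
          ((hf.mul_const _).add hgap) ?_
        filter_upwards [hf0, hfg] with x hx0 hx
        exact abs_div_sub_div_le hx0 hx hZ hZZh
    _ = Z * (1 / Z - 1 / Zh) + (Zh - Z) / Zh := by
        rw [integral_add (hf.mul_const _) hgap, integral_mul_const,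
          integral_div, integral_sub hg hf]
    _ = 2 * (1 - Z / Zh) := by
        field_simp
        ring

theorem const_mul_setIntegral_le_integral {A : Set X} {c : ℝ} (hA : MeasurableSet A)
    (hf0 : 0 ≤ᵐ[μ] f) (hf : Integrable f μ) (hg : Integrable g μ)
    (hcgf : ∀ᵐ x ∂μ, x ∈ A → c * g x ≤ f x) :
    c * ∫ x in A, g x ∂μ ≤ ∫ x, f x ∂μ :=
  calc c * ∫ x in A, g x ∂μ = ∫ x in A, c * g x ∂μ := (integral_const_mul c _).symm
    _ ≤ ∫ x in A, f x ∂μ :=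
      integral_mono_ae (hg.restrict.const_mul c) hf.restrict ((ae_restrict_iff' hA).2 hcgf)
    _ ≤ ∫ x, f x ∂μ := setIntegral_le_integral hf hf0

end

theorem truncated_posterior_tv_bound_general
    {X : Type*} [MeasurableSpace X] (μ₀ : Measure X)
    (p phat : X → ℝ)
    (hp0 : ∀ x, 0 ≤ p x)
    (hpInt : Integrable p μ₀) (hphatInt : Integrable phat μ₀)
    (hZpos : 0 < ∫ x, p x ∂μ₀) (hZhatpos : 0 < ∫ x, phat x ∂μ₀)
    (ε η : ℝ) (hε : 0 ≤ ε) (hε1 : ε < 1) (hη : 0 ≤ η)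
    (A : Set X) (hA : MeasurableSet A)
    (h1 : ∀ᵐ x ∂μ₀, p x ≤ phat x)
    (h2 : ∀ᵐ x ∂μ₀, x ∈ A → (1 - ε) * phat x ≤ p x)
    (h3 : (1 - η) * ∫ x, phat x ∂μ₀ ≤ ∫ x in A, phat x ∂μ₀) :
    (1 / 2) * ∫ x, |p x / (∫ y, p y ∂μ₀) - phat x / (∫ y, phat y ∂μ₀)| ∂μ₀
      ≤ 3 * (ε + η) / 2 - ε * η := by
  have hp0ae : 0 ≤ᵐ[μ₀] p := Filter.Eventually.of_forall hp0
  have hmass : (1 - ε) * (1 - η) * ∫ x, phat x ∂μ₀ ≤ ∫ x, p x ∂μ₀ :=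
    calc (1 - ε) * (1 - η) * ∫ x, phat x ∂μ₀ = (1 - ε) * ((1 - η) * ∫ x, phat x ∂μ₀) := by ring
      _ ≤ (1 - ε) * ∫ x in A, phat x ∂μ₀ := by gcongr
      _ ≤ ∫ x, p x ∂μ₀ :=
        const_mul_setIntegral_le_integral hA hp0ae hpInt hphatInt h2
  have hratio : (1 - ε) * (1 - η) ≤ (∫ x, p x ∂μ₀) / ∫ x, phat x ∂μ₀ :=
    (le_div_iff₀ hZhatpos).2 hmass
  have htv := integral_abs_div_integral_sub_div_integral_le hp0ae h1 hpInt hphatInt hZpos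
  nlinarith

/-- (Paper's Theorem 4.2.)  Under (i) `p ≤ p̂` a.e.,
(ii) `(1−ε)·p̂ ≤ p` a.e. on `A`, and (iii) `∫_A p̂ ≥ (1−η)·Ẑ`, the total variation distance
between the truncated posterior `Π̂` (density `p̂/Ẑ`) and the exact posterior `Π`
(density `p/Z`) satisfies `(1/2)∫|p/Z − p̂/Ẑ| dμ₀ ≤ 3(ε+η)/2 − εη`. -/
theorem truncated_posterior_tv_bound
    {X : Type*} [MeasurableSpace X] (μ₀ : Measure X)
    (p phat : X → ℝ) (hp : Measurable p) (hphat : Measurable phat)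
    (hp0 : ∀ x, 0 ≤ p x) (hphat0 : ∀ x, 0 ≤ phat x)
    (hpInt : Integrable p μ₀) (hphatInt : Integrable phat μ₀)
    (hZpos : 0 < ∫ x, p x ∂μ₀) (hZhatpos : 0 < ∫ x, phat x ∂μ₀)
    (ε η : ℝ) (hε : 0 ≤ ε) (hε1 : ε < 1) (hη : 0 ≤ η) (hη1 : η < 1)
    (A : Set X) (hA : MeasurableSet A)
    (h1 : ∀ᵐ x ∂μ₀, p x ≤ phat x)
    (h2 : ∀ᵐ x ∂μ₀, x ∈ A → (1 - ε) * phat x ≤ p x)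
    (h3 : (1 - η) * ∫ x, phat x ∂μ₀ ≤ ∫ x in A, phat x ∂μ₀) :
    (1 / 2) * ∫ x, |p x / (∫ y, p y ∂μ₀) - phat x / (∫ y, phat y ∂μ₀)| ∂μ₀
      ≤ 3 * (ε + η) / 2 - ε * η :=
  truncated_posterior_tv_bound_general μ₀ p phat hp0 hpInt hphatInt hZpos hZhatpos ε η hε hε1 hη A
    hA h1 h2 h3
end

section
/- Under hypotheses (i)–(iii), the exact posterior mass of A satisfies Π(A) = (∫_A p dμ₀)/Z ≥ (1−ε)·(1−η). -/
open MeasureTheory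

namespace MeasureTheory

variable {X : Type*} [MeasurableSpace X] {μ : Measure X} {f g : X → ℝ} {s : Set X}

theorem const_mul_setIntegral_le_of_ae_imp (c : ℝ) (hs : MeasurableSet s)
    (hf : IntegrableOn f s μ) (hg : IntegrableOn g s μ)
    (hfg : ∀ᵐ x ∂μ, x ∈ s → c * f x ≤ g x) :
    c * ∫ x in s, f x ∂μ ≤ ∫ x in s, g x ∂μ := by
  rw [← integral_const_mul]
  exact setIntegral_mono_ae_restrict (hf.const_mul c) hg ((ae_restrict_iff' hs).2 hfg)

end MeasureTheory

theorem truncated_posterior_mass_of_good_set_general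
    {X : Type*} [MeasurableSpace X] (μ₀ : Measure X)
    (p phat : X → ℝ)
    (hpInt : Integrable p μ₀) (hphatInt : Integrable phat μ₀)
    (hZpos : 0 < ∫ x, p x ∂μ₀)
    (ε η : ℝ) (hε1 : ε < 1) (hη1 : η < 1)
    (A : Set X) (hA : MeasurableSet A)
    (h1 : ∀ᵐ x ∂μ₀, p x ≤ phat x)
    (h2 : ∀ᵐ x ∂μ₀, x ∈ A → (1 - ε) * phat x ≤ p x)
    (h3 : (1 - η) * ∫ x, phat x ∂μ₀ ≤ ∫ x in A, phat x ∂μ₀) :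
    (1 - ε) * (1 - η) ≤ (∫ x in A, p x ∂μ₀) / ∫ x, p x ∂μ₀ := by
  have hZ_le_Zhat : ∫ x, p x ∂μ₀ ≤ ∫ x, phat x ∂μ₀ := integral_mono_ae hpInt hphatInt h1
  have hε0 : 0 ≤ 1 - ε := by linarith
  have hη0 : 0 ≤ 1 - η := by linarith
  rw [le_div_iff₀ hZpos]
  calc (1 - ε) * (1 - η) * ∫ x, p x ∂μ₀
      ≤ (1 - ε) * ((1 - η) * ∫ x, phat x ∂μ₀) := by
        rw [mul_assoc]
        gcongr
    _ ≤ (1 - ε) * ∫ x in A, phat x ∂μ₀ := by gcongr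
    _ ≤ ∫ x in A, p x ∂μ₀ :=
        const_mul_setIntegral_le_of_ae_imp _ hA hphatInt.integrableOn hpInt.integrableOn h2

/-- Under (i) `p ≤ p̂` a.e., (ii) `(1−ε)·p̂ ≤ p` a.e. on `A`, and
(iii) `∫_A p̂ ≥ (1−η)·Ẑ`, the exact posterior mass of `A` satisfies
`Π(A) = (∫_A p dμ₀)/Z ≥ (1−ε)(1−η)`. -/
theorem truncated_posterior_mass_of_good_set
    {X : Type*} [MeasurableSpace X] (μ₀ : Measure X)
    (p phat : X → ℝ) (hp : Measurable p) (hphat : Measurable phat)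
    (hp0 : ∀ x, 0 ≤ p x) (hphat0 : ∀ x, 0 ≤ phat x)
    (hpInt : Integrable p μ₀) (hphatInt : Integrable phat μ₀)
    (hZpos : 0 < ∫ x, p x ∂μ₀) (hZhatpos : 0 < ∫ x, phat x ∂μ₀)
    (ε η : ℝ) (hε : 0 ≤ ε) (hε1 : ε < 1) (hη : 0 ≤ η) (hη1 : η < 1)
    (A : Set X) (hA : MeasurableSet A)
    (h1 : ∀ᵐ x ∂μ₀, p x ≤ phat x)
    (h2 : ∀ᵐ x ∂μ₀, x ∈ A → (1 - ε) * phat x ≤ p x)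
    (h3 : (1 - η) * ∫ x, phat x ∂μ₀ ≤ ∫ x in A, phat x ∂μ₀) :
    (1 - ε) * (1 - η) ≤ (∫ x in A, p x ∂μ₀) / ∫ x, p x ∂μ₀ :=
  truncated_posterior_mass_of_good_set_general μ₀ p phat hpInt hphatInt hZpos ε η hε1 hη1 A hA h1 h2
    h3
end

section
/- Define τ(u, γ) = μ←(γ) if (dν/dμ)(μ←(γ)) ≥ u and τ(u, γ) = 0 otherwise, and let F_K(t) = ∫_0^{max(t,0)} s^{K−1} e^{−s} / Γ(K) ds denote the Gamma(K,1) cumulative distribution function. Then, as an identity in [0,∞], ∫_0^∞ (t^{K−1} e^{−t} / Γ(K)) · (∫_t^∞ ∫_t^∞ ∫_0^1 ∫_0^1 −log π(τ(u_1, γ_1)·τ(u_2, γ_2)) du_1 du_2 dγ_1 dγ_2) dt = ∫_{(0,∞)} ∫_{(0,∞)} −log π(x_1·x_2) · F_K(μ([max(x_1, x_2), ∞))) ν(dx_1) ν(dx_2). -/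
/-
`μ←` is the generalized inverse of the tail `T x = μ [x, ∞)`. Because `μ` has no atoms and
finite tails, `T (μ← γ) = γ` and `x < μ← γ ↔ γ < T x` for `γ > 0`, so `μ←` pushes Lebesgue
measure on `(0, ∞)` forward to `μ`. Integrating out `u₁, u₂` first weights `μ← γᵢ` by
`dν/dμ`, so each `γ`-integral over `(t, ∞)` becomes a `ν`-integral over `{x | T x > t}`.
By Tonelli the `t`-integral moves inside, where the two constraints combine to
`t < T (max x₁ x₂)`, and integrating the Gamma density over `(0, T (max x₁ x₂))` gives `F_K`.
-/

open MeasureTheory Set Filter Topology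
open scoped ENNReal

lemma antitone_measure_Ici (μ : Measure ℝ) : Antitone fun x => μ (Ici x) :=
  fun _ _ h => measure_mono (Ici_subset_Ici.2 h)

lemma ae_pos_of_measure_Iic_zero {ρ : Measure ℝ} (hρ : ρ (Iic 0) = 0) : ∀ᵐ x ∂ρ, 0 < x :=
  ae_iff.2 (measure_mono_null (fun _ hx => not_lt.1 hx) hρ)

lemma MeasureTheory.Measure.ext_of_Ioi_pos {ρ σ : Measure ℝ} (hρ : ρ (Iic 0) = 0)
    (hσ : σ (Iic 0) = 0) (hfin : ∀ y, 0 < y → σ (Ioi y) ≠ ⊤)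
    (h : ∀ y, 0 < y → ρ (Ioi y) = σ (Ioi y)) : ρ = σ := by
  have hunion : (⋃ n : ℕ, Ioi (1 / ((n : ℝ) + 1))) = Ioi 0 := by
    ext x
    simp only [mem_iUnion, mem_Ioi]
    exact ⟨fun ⟨_, hn⟩ => Nat.one_div_pos_of_nat.trans hn, exists_nat_one_div_lt⟩
  rw [← Measure.restrict_eq_self_of_ae_mem (s := Ioi 0) (ae_pos_of_measure_Iic_zero hρ),
    ← Measure.restrict_eq_self_of_ae_mem (s := Ioi 0) (ae_pos_of_measure_Iic_zero hσ), ← hunion,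
    Measure.restrict_iUnion_congr]
  intro n
  have hε : (0 : ℝ) < 1 / (n + 1) := Nat.one_div_pos_of_nat
  have hIoi : ∀ κ : Measure ℝ, ∀ a, κ.restrict (Ioi (1 / ((n : ℝ) + 1))) (Ioi a) =
      κ (Ioi (max a (1 / (n + 1)))) := fun κ a => by
    rw [Measure.restrict_apply measurableSet_Ioi, Ioi_inter_Ioi]
  have : IsFiniteMeasure (ρ.restrict (Ioi (1 / ((n : ℝ) + 1)))) :=
    ⟨by rw [Measure.restrict_apply_univ, h _ hε]; exact (hfin _ hε).lt_top⟩
  refine ext_of_generate_finite _ (BorelSpace.measurable_eq.trans (borel_eq_generateFrom_Ioi ℝ))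
    isPiSystem_Ioi ?_ ?_
  · rintro _ ⟨a, rfl⟩
    rw [hIoi, hIoi, h _ (hε.trans_le (le_max_right _ _))]
  · rw [Measure.restrict_apply_univ, Measure.restrict_apply_univ, h _ hε]

lemma setLIntegral_Icc_ite_le {F : ℝ → ℝ≥0∞} (hF : F 0 = 0) {p : ℝ} (hp : p ≤ 1) (x : ℝ) :
    ∫⁻ u in Icc 0 1, F (if u ≤ p then x else 0) = ENNReal.ofReal p * F x := by
  have hind : (fun u => F (if u ≤ p then x else 0)) = (Iic p).indicator fun _ => F x := by
    ext u
    by_cases hu : u ≤ p <;> simp [hu, hF]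
  rw [hind, lintegral_indicator measurableSet_Iic, Measure.restrict_restrict measurableSet_Iic,
    show Iic p ∩ Icc 0 1 = Icc 0 p from ext fun _ => ⟨fun h => ⟨h.2.1, h.1⟩,
      fun h => ⟨h.2, h.1, h.2.trans hp⟩⟩, setLIntegral_const, Real.volume_Icc, sub_zero, mul_comm]

lemma setLIntegral_Icc_setLIntegral_Icc_ite_mul_ite {F : ℝ → ℝ≥0∞} (hF : F 0 = 0) {p q : ℝ}
    (hp : p ≤ 1) (hq : q ≤ 1) (x y : ℝ) :
    ∫⁻ v in Icc 0 1, ∫⁻ u in Icc 0 1, F ((if u ≤ p then x else 0) * (if v ≤ q then y else 0)) =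
      ENNReal.ofReal q * (ENNReal.ofReal p * F (x * y)) := by
  calc _ = ∫⁻ v in Icc 0 1, ENNReal.ofReal p * F (x * if v ≤ q then y else 0) :=
        lintegral_congr fun _ => setLIntegral_Icc_ite_le (F := fun z => F (z * _)) (by simp [hF]) hp x
    _ = _ := setLIntegral_Icc_ite_le (F := fun z => ENNReal.ofReal p * F (x * z))
        (by simp [hF]) hq y

lemma lintegral_mul_setLIntegral_comm {α β : Type*} [MeasurableSpace α] [MeasurableSpace β]
    {μ : Measure α} {κ : Measure β} [SFinite μ] [SFinite κ] {R : Set (α × β)}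
    (hR : MeasurableSet R) {w : α → ℝ≥0∞} {G : β → ℝ≥0∞} (hw : Measurable w)
    (hG : Measurable G) :
    ∫⁻ a, w a * ∫⁻ b in Prod.mk a ⁻¹' R, G b ∂κ ∂μ =
      ∫⁻ b, G b * ∫⁻ a in (fun a => (a, b)) ⁻¹' R, w a ∂μ ∂κ := by
  have hF : Measurable (R.indicator fun q : α × β => w q.1 * G q.2) :=
    ((hw.comp measurable_fst).mul (hG.comp measurable_snd)).indicator hR
  calc ∫⁻ a, w a * ∫⁻ b in Prod.mk a ⁻¹' R, G b ∂κ ∂μ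
      = ∫⁻ q, R.indicator (fun q => w q.1 * G q.2) q ∂μ.prod κ := by
        rw [lintegral_prod _ hF.aemeasurable]
        refine lintegral_congr fun a => ?_
        rw [← lintegral_indicator (measurable_prodMk_left hR),
          ← lintegral_const_mul _ (hG.indicator (measurable_prodMk_left hR))]
        refine lintegral_congr fun b => ?_
        by_cases h : (a, b) ∈ R <;> simp [h]
    _ = ∫⁻ b, G b * ∫⁻ a in (fun a => (a, b)) ⁻¹' R, w a ∂μ ∂κ := by
        rw [lintegral_prod_symm _ hF.aemeasurable]
        refine lintegral_congr fun b => ?_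
        rw [← lintegral_indicator (measurable_prodMk_right hR),
          ← lintegral_const_mul _ (hw.indicator (measurable_prodMk_right hR))]
        refine lintegral_congr fun a => ?_
        by_cases h : (a, b) ∈ R <;> simp [h, mul_comm]

lemma setLIntegral_Ioo_ofReal_eq_intervalIntegral {g : ℝ → ℝ} {a b : ℝ} (hab : a ≤ b)
    (hg : IntegrableOn g (Ioc a b)) (hg0 : ∀ t ∈ Ioc a b, 0 ≤ g t) :
    ∫⁻ t in Ioo a b, ENNReal.ofReal (g t) = ENNReal.ofReal (∫ t in a..b, g t) := by
  rw [intervalIntegral.integral_of_le hab, ofReal_integral_eq_lintegral_ofReal hg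
    ((ae_restrict_iff' measurableSet_Ioc).2 (Eventually.of_forall hg0))]
  exact setLIntegral_congr Ioo_ae_eq_Ioc

lemma setOf_ofReal_lt_inter_Ioi {m : ℝ≥0∞} (hm : m ≠ ⊤) :
    {t : ℝ | ENNReal.ofReal t < m} ∩ Ioi 0 = Ioo 0 m.toReal :=
  ext fun _ => ⟨fun h => ⟨h.2, (ENNReal.ofReal_lt_iff_lt_toReal h.2.le hm).1 h.1⟩,
    fun h => ⟨(ENNReal.ofReal_lt_iff_lt_toReal h.1.le hm).2 h.2, h.1⟩⟩

lemma setLIntegral_Ioi_ofReal_mul_setLIntegral_lt {β : Type*} [MeasurableSpace β]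
    {κ : Measure β} [SFinite κ] {g : ℝ → ℝ} (hg : Continuous g) (hg0 : ∀ t, 0 < t → 0 ≤ g t)
    {M G : β → ℝ≥0∞} (hM : Measurable M) (hG : Measurable G) (hM_fin : ∀ᵐ p ∂κ, M p ≠ ⊤) :
    ∫⁻ t in Ioi 0, ENNReal.ofReal (g t) * ∫⁻ p in {p | ENNReal.ofReal t < M p}, G p ∂κ =
      ∫⁻ p, G p * ENNReal.ofReal (∫ t in 0..(M p).toReal, g t) ∂κ := by
  have hR : MeasurableSet {q : ℝ × β | ENNReal.ofReal q.1 < M q.2} :=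
    measurableSet_lt (ENNReal.measurable_ofReal.comp measurable_fst) (hM.comp measurable_snd)
  refine (lintegral_mul_setLIntegral_comm hR (by fun_prop) hG).trans
    (lintegral_congr_ae (hM_fin.mono fun p hp => ?_))
  beta_reduce
  rw [Measure.restrict_restrict (measurable_prodMk_right hR),
    show (fun a => (a, p)) ⁻¹' {q : ℝ × β | ENNReal.ofReal q.1 < M q.2} =
      {a | ENNReal.ofReal a < M p} from rfl, setOf_ofReal_lt_inter_Ioi hp,
    setLIntegral_Ioo_ofReal_eq_intervalIntegral ENNReal.toReal_nonneg hg.integrableOn_Ioc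
      fun t ht => hg0 t ht.1]

/-- The paper's `μ←`. -/
noncomputable def tailInv (μ : Measure ℝ) (γ : ℝ) : ℝ :=
  sInf {y | 0 < y ∧ μ (Ici y) ≤ ENNReal.ofReal γ}

section tailInv

variable {μ : Measure ℝ}

lemma exists_pos_measure_Ici_le (hμ_tail : ∀ y, 0 < y → μ (Ici y) < ⊤) {γ : ℝ} (hγ : 0 < γ) :
    ∃ y, 0 < y ∧ μ (Ici y) ≤ ENNReal.ofReal γ := by
  have hlim : Tendsto (fun y => μ (Ici y)) atTop (𝓝 0) := by
    have := tendsto_measure_iInter_atTop (μ := μ) (fun y : ℝ => nullMeasurableSet_Ici)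
      antitone_Ici ⟨1, (hμ_tail 1 one_pos).ne⟩
    rwa [show (⋂ y : ℝ, Ici y) = ∅ from
      eq_empty_of_forall_notMem fun x hx => by
        linarith [mem_Ici.1 (mem_iInter.1 hx (x + 1))],
      measure_empty] at this
  obtain ⟨y, hy, hy0⟩ := ((hlim.eventually (gt_mem_nhds (ENNReal.ofReal_pos.2 hγ))).and
    (eventually_gt_atTop 0)).exists
  exact ⟨y, hy0, hy.le⟩

lemma measure_Ici_tailInv_le [NullSingletonClass μ] (hμ_tail : ∀ y, 0 < y → μ (Ici y) < ⊤)
    {γ : ℝ} (hγ : 0 < γ) : μ (Ici (tailInv μ γ)) ≤ ENNReal.ofReal γ := by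
  set a := tailInv μ γ
  have hunion : (⋃ n : ℕ, Ici (a + 1 / (n + 1))) = Ioi a :=
    iUnion_Ici_eq_Ioi_of_lt_of_tendsto (fun n => lt_add_of_pos_right a Nat.one_div_pos_of_nat)
      (by simpa using tendsto_one_div_add_atTop_nhds_zero_nat.const_add a)
  rw [← measure_congr Ioi_ae_eq_Ici, ← hunion, Monotone.measure_iUnion]
  · refine iSup_le fun n => ?_
    obtain ⟨y, ⟨-, hy⟩, hya⟩ := exists_lt_of_csInf_lt (exists_pos_measure_Ici_le hμ_tail hγ)
      (lt_add_of_pos_right a (Nat.one_div_pos_of_nat (n := n)))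
    exact (measure_mono (Ici_subset_Ici.2 hya.le)).trans hy
  · exact fun m n hmn => Ici_subset_Ici.2 (add_le_add_right
      (Nat.one_div_le_one_div hmn) a)

lemma measure_Ici_of_nonpos (hμ_inf : μ (Ioi 0) = ⊤) {x : ℝ} (hx : x ≤ 0) :
    μ (Ici x) = ⊤ :=
  top_unique (hμ_inf.symm.le.trans
    (measure_mono (Ioi_subset_Ici_self.trans (Ici_subset_Ici.2 hx))))

lemma lt_tailInv_iff [NullSingletonClass μ] (hμ_inf : μ (Ioi 0) = ⊤)
    (hμ_tail : ∀ y, 0 < y → μ (Ici y) < ⊤) {γ : ℝ} (hγ : 0 < γ) {x : ℝ} :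
    x < tailInv μ γ ↔ ENNReal.ofReal γ < μ (Ici x) := by
  refine ⟨fun hx => ?_, fun hx => ?_⟩
  · rcases le_or_gt x 0 with hx0 | hx0
    · exact (measure_Ici_of_nonpos hμ_inf hx0).symm ▸ ENNReal.ofReal_lt_top
    · by_contra! hle
      exact (csInf_le ⟨0, fun _ hy => hy.1.le⟩ (show x ∈ {y | 0 < y ∧ μ (Ici y) ≤ _} from
        ⟨hx0, hle⟩)).not_gt hx
  · by_contra! hle
    exact ((measure_mono (Ici_subset_Ici.2 hle)).trans
      (measure_Ici_tailInv_le hμ_tail hγ)).not_gt hx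

lemma tailInv_pos [NullSingletonClass μ] (hμ_inf : μ (Ioi 0) = ⊤)
    (hμ_tail : ∀ y, 0 < y → μ (Ici y) < ⊤) {γ : ℝ} (hγ : 0 < γ) : 0 < tailInv μ γ :=
  (lt_tailInv_iff hμ_inf hμ_tail hγ).2 <|
    (measure_Ici_of_nonpos hμ_inf le_rfl).symm ▸ ENNReal.ofReal_lt_top

lemma measure_Ici_tailInv [NullSingletonClass μ] (hμ_inf : μ (Ioi 0) = ⊤)
    (hμ_tail : ∀ y, 0 < y → μ (Ici y) < ⊤) {γ : ℝ} (hγ : 0 < γ) :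
    μ (Ici (tailInv μ γ)) = ENNReal.ofReal γ := by
  set a := tailInv μ γ
  have ha := tailInv_pos hμ_inf hμ_tail hγ
  refine (measure_Ici_tailInv_le hμ_tail hγ).antisymm ?_
  have hinter : (⋂ n : ℕ, Ici (a - 1 / (n + 1))) = Ici a := by
    ext x
    simp only [mem_iInter, mem_Ici]
    refine ⟨fun h => le_of_forall_pos_lt_add fun ε hε => ?_, fun h n => ?_⟩
    · obtain ⟨n, hn⟩ := exists_nat_one_div_lt hε
      linarith [h n]
    · linarith [Nat.one_div_pos_of_nat (α := ℝ) (n := n)]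
  obtain ⟨n₀, hn₀⟩ := exists_nat_one_div_lt ha
  rw [← hinter, Antitone.measure_iInter (fun m n hmn => Ici_subset_Ici.2
      (sub_le_sub_left (Nat.one_div_le_one_div hmn) a)) (fun n => nullMeasurableSet_Ici)
      ⟨n₀, (hμ_tail _ (sub_pos.2 hn₀)).ne⟩]
  exact le_iInf fun n => ((lt_tailInv_iff hμ_inf hμ_tail hγ).1
    (sub_lt_self a Nat.one_div_pos_of_nat)).le

lemma antitoneOn_tailInv (hμ_tail : ∀ y, 0 < y → μ (Ici y) < ⊤) :
    AntitoneOn (tailInv μ) (Ioi 0) := fun _ hγ _ _ hγγ' =>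
  csInf_le_csInf ⟨0, fun _ hy => hy.1.le⟩ (exists_pos_measure_Ici_le hμ_tail hγ)
    fun _ hy => ⟨hy.1, hy.2.trans (ENNReal.ofReal_le_ofReal hγγ')⟩

lemma aemeasurable_tailInv (hμ_tail : ∀ y, 0 < y → μ (Ici y) < ⊤) :
    AEMeasurable (tailInv μ) (volume.restrict (Ioi 0)) :=
  aemeasurable_restrict_of_antitoneOn measurableSet_Ioi (antitoneOn_tailInv hμ_tail)

lemma map_tailInv [NullSingletonClass μ] (hμ_supp : μ (Iic 0) = 0) (hμ_inf : μ (Ioi 0) = ⊤)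
    (hμ_tail : ∀ y, 0 < y → μ (Ici y) < ⊤) :
    (volume.restrict (Ioi 0)).map (tailInv μ) = μ := by
  have hmap : ∀ s, MeasurableSet s →
      (volume.restrict (Ioi 0)).map (tailInv μ) s = volume (tailInv μ ⁻¹' s ∩ Ioi 0) :=
    fun s hs => by
      rw [Measure.map_apply_of_aemeasurable (aemeasurable_tailInv hμ_tail) hs,
        Measure.restrict_apply' measurableSet_Ioi]
  refine Measure.ext_of_Ioi_pos ?_ hμ_supp ?_ ?_
  · rw [hmap _ measurableSet_Iic, show tailInv μ ⁻¹' Iic 0 ∩ Ioi 0 = ∅ from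
      eq_empty_of_forall_notMem fun γ hγ => (tailInv_pos hμ_inf hμ_tail hγ.2).not_ge hγ.1,
      measure_empty]
  · exact fun y hy => (measure_mono Ioi_subset_Ici_self).trans_lt (hμ_tail y hy) |>.ne
  · intro y hy
    have hpre : tailInv μ ⁻¹' Ioi y ∩ Ioi 0 = Ioo 0 (μ (Ici y)).toReal := by
      ext γ
      simp only [mem_inter_iff, mem_preimage, mem_Ioi, mem_Ioo]
      refine ⟨fun ⟨h, hγ⟩ => ⟨hγ, ?_⟩, fun ⟨hγ, h⟩ => ⟨?_, hγ⟩⟩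
      · exact (ENNReal.ofReal_lt_iff_lt_toReal hγ.le (hμ_tail y hy).ne).1
          ((lt_tailInv_iff hμ_inf hμ_tail hγ).1 h)
      · exact (lt_tailInv_iff hμ_inf hμ_tail hγ).2
          ((ENNReal.ofReal_lt_iff_lt_toReal hγ.le (hμ_tail y hy).ne).2 h)
    rw [hmap _ measurableSet_Ioi, hpre, Real.volume_Ioo, sub_zero,
      ENNReal.ofReal_toReal (hμ_tail y hy).ne, measure_congr Ioi_ae_eq_Ici]

lemma setLIntegral_Ioi_comp_tailInv [NullSingletonClass μ] (hμ_supp : μ (Iic 0) = 0)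
    (hμ_inf : μ (Ioi 0) = ⊤) (hμ_tail : ∀ y, 0 < y → μ (Ici y) < ⊤) {t : ℝ} (ht : 0 ≤ t)
    {f : ℝ → ℝ≥0∞} (hf : Measurable f) :
    ∫⁻ γ in Ioi t, f (tailInv μ γ) = ∫⁻ x in {x | ENNReal.ofReal t < μ (Ici x)}, f x ∂μ := by
  set S := {x | ENNReal.ofReal t < μ (Ici x)}
  have hS : MeasurableSet S :=
    measurableSet_lt measurable_const (antitone_measure_Ici μ).measurable
  calc ∫⁻ γ in Ioi t, f (tailInv μ γ)
      = ∫⁻ γ in Ioi 0, (Ioi t).indicator (fun γ => f (tailInv μ γ)) γ := by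
        rw [lintegral_indicator measurableSet_Ioi, Measure.restrict_restrict measurableSet_Ioi,
          Ioi_inter_Ioi, max_eq_left ht]
    _ = ∫⁻ γ in Ioi 0, S.indicator f (tailInv μ γ) := by
        refine setLIntegral_congr_fun measurableSet_Ioi fun γ hγ => ?_
        simp only [indicator_apply, mem_Ioi, S, mem_ofPred_eq,
          measure_Ici_tailInv hμ_inf hμ_tail hγ, ENNReal.ofReal_lt_ofReal_iff hγ]
    _ = ∫⁻ x in S, f x ∂μ := by
        rw [← lintegral_map' (hf.indicator hS).aemeasurable (aemeasurable_tailInv hμ_tail),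
          map_tailInv hμ_supp hμ_inf hμ_tail, lintegral_indicator hS]

lemma setLIntegral_Ioi_mul_comp_tailInv [NullSingletonClass μ]
    (hμ_supp : μ (Iic 0) = 0) (hμ_inf : μ (Ioi 0) = ⊤)
    (hμ_tail : ∀ y, 0 < y → μ (Ici y) < ⊤) {t : ℝ} (ht : 0 ≤ t) {d f : ℝ → ℝ≥0∞}
    (hd : Measurable d) (hf : Measurable f) :
    ∫⁻ γ in Ioi t, d (tailInv μ γ) * f (tailInv μ γ) =
      ∫⁻ x in {x | ENNReal.ofReal t < μ (Ici x)}, f x ∂μ.withDensity d := by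
  rw [setLIntegral_withDensity_eq_setLIntegral_mul μ hd hf (measurableSet_lt measurable_const
    (antitone_measure_Ici μ).measurable)]
  exact setLIntegral_Ioi_comp_tailInv hμ_supp hμ_inf hμ_tail ht (hd.mul hf)

lemma setLIntegral_Ioi_setLIntegral_Ioi_mul_comp_tailInv [SFinite μ] [NullSingletonClass μ]
    (hμ_supp : μ (Iic 0) = 0) (hμ_inf : μ (Ioi 0) = ⊤) (hμ_tail : ∀ y, 0 < y → μ (Ici y) < ⊤)
    {t : ℝ} (ht : 0 ≤ t) {d : ℝ → ℝ≥0∞} (hd : Measurable d) {F : ℝ × ℝ → ℝ≥0∞}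
    (hF : Measurable F) :
    ∫⁻ γ₂ in Ioi t, ∫⁻ γ₁ in Ioi t,
        d (tailInv μ γ₂) * (d (tailInv μ γ₁) * F (tailInv μ γ₁, tailInv μ γ₂)) =
      ∫⁻ p in {p | ENNReal.ofReal t < μ (Ici (max p.1 p.2))}, F p
        ∂(μ.withDensity d).prod (μ.withDensity d) := by
  set S := {x | ENNReal.ofReal t < μ (Ici x)}
  have hS : {p : ℝ × ℝ | ENNReal.ofReal t < μ (Ici (max p.1 p.2))} = S ×ˢ S := by
    ext p
    simp only [mem_prod, S, mem_ofPred_eq, (antitone_measure_Ici μ).map_max, lt_min_iff]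
  calc _ = ∫⁻ γ₂ in Ioi t,
          d (tailInv μ γ₂) * ∫⁻ x₁ in S, F (x₁, tailInv μ γ₂) ∂μ.withDensity d :=
        lintegral_congr fun γ₂ => by
          simp only [mul_left_comm (d (tailInv μ γ₂))]
          rw [setLIntegral_Ioi_mul_comp_tailInv hμ_supp hμ_inf hμ_tail ht hd
              (f := fun x₁ => d (tailInv μ γ₂) * F (x₁, tailInv μ γ₂))
              (measurable_const.mul (hF.comp (measurable_id.prodMk measurable_const))),
            lintegral_const_mul (f := fun x₁ => F (x₁, tailInv μ γ₂)) _
              (hF.comp (measurable_id.prodMk measurable_const))]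
    _ = ∫⁻ x₂ in S, ∫⁻ x₁ in S, F (x₁, x₂) ∂μ.withDensity d ∂μ.withDensity d :=
        setLIntegral_Ioi_mul_comp_tailInv hμ_supp hμ_inf hμ_tail ht hd hF.lintegral_prod_left'
    _ = _ := by
        rw [hS, ← Measure.prod_restrict, lintegral_prod_symm _ hF.aemeasurable]

/-- The paper's `τ(u, γ)`, with `ρ` a version of `dν/dμ`. -/
noncomputable def rejection (μ : Measure ℝ) (ρ : ℝ → ℝ) (u γ : ℝ) : ℝ :=
  if u ≤ ρ (tailInv μ γ) then tailInv μ γ else 0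

lemma setLIntegral_Ioi_setLIntegral_Ioi_rejection_mul_rejection [SFinite μ] [NullSingletonClass μ]
    (hμ_supp : μ (Iic 0) = 0) (hμ_inf : μ (Ioi 0) = ⊤) (hμ_tail : ∀ y, 0 < y → μ (Ici y) < ⊤)
    {t : ℝ} (ht : 0 ≤ t) {ρ : ℝ → ℝ} (hρ : Measurable ρ) (hρ1 : ∀ x, ρ x ≤ 1)
    {G : ℝ → ℝ≥0∞} (hG : Measurable G) (hG0 : G 0 = 0) :
    ∫⁻ γ₂ in Ioi t, ∫⁻ γ₁ in Ioi t, ∫⁻ u₂ in Icc 0 1, ∫⁻ u₁ in Icc 0 1,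
        G (rejection μ ρ u₁ γ₁ * rejection μ ρ u₂ γ₂) =
      ∫⁻ p in {p | ENNReal.ofReal t < μ (Ici (max p.1 p.2))}, G (p.1 * p.2)
        ∂(μ.withDensity fun y => ENNReal.ofReal (ρ y)).prod
          (μ.withDensity fun y => ENNReal.ofReal (ρ y)) :=
  (lintegral_congr fun _ => lintegral_congr fun _ =>
    setLIntegral_Icc_setLIntegral_Icc_ite_mul_ite hG0 (hρ1 _) (hρ1 _) _ _).trans
    (setLIntegral_Ioi_setLIntegral_Ioi_mul_comp_tailInv hμ_supp hμ_inf hμ_tail ht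
      (ENNReal.measurable_ofReal.comp hρ) (hG.comp (measurable_fst.mul measurable_snd)))

end tailInv

theorem rejection_truncation_change_of_variables_general
    (ν μ : Measure ℝ) [SigmaFinite ν] [SigmaFinite μ]
    (hμ_atomless : ∀ x : ℝ, μ {x} = 0)
    (hν_supp : ν (Set.Iic 0) = 0) (hμ_supp : μ (Set.Iic 0) = 0)
    (hμ_inf : μ (Set.Ioi 0) = ⊤)
    (hμ_tail : ∀ y : ℝ, 0 < y → μ (Set.Ici y) < ⊤)
    (dνdμ : ℝ → ℝ) (hd_meas : Measurable dνdμ)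
    (hd01 : ∀ y, 0 ≤ dνdμ y ∧ dνdμ y ≤ 1)
    (hac : ν = μ.withDensity fun y => ENNReal.ofReal (dνdμ y))
    (μinv : ℝ → ℝ)
    (hμinv : ∀ x : ℝ, μinv x = sInf {y : ℝ | 0 < y ∧ μ (Set.Ici y) ≤ ENNReal.ofReal x})
    (π : ℝ → ℝ) (hπmeas : Measurable π)
    (hπ0 : π 0 = 1)
    (τ : ℝ → ℝ → ℝ)
    (hτ : ∀ u γ, τ u γ = if u ≤ dνdμ (μinv γ) then μinv γ else 0)
    (K : ℕ)
    (FK : ℝ → ℝ)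
    (hFK : ∀ t, FK t = ∫ s in (0 : ℝ)..(max t 0),
        s ^ (K - 1) * Real.exp (-s) / Real.Gamma K) :
    ∫⁻ t in Set.Ioi (0 : ℝ),
        ENNReal.ofReal (t ^ (K - 1) * Real.exp (-t) / Real.Gamma K) *
          ∫⁻ γ2 in Set.Ioi t, ∫⁻ γ1 in Set.Ioi t,
            ∫⁻ u2 in Set.Icc (0 : ℝ) 1, ∫⁻ u1 in Set.Icc (0 : ℝ) 1,
              ENNReal.ofReal (-Real.log (π (τ u1 γ1 * τ u2 γ2)))
      = ∫⁻ x1, ∫⁻ x2,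
          ENNReal.ofReal (-Real.log (π (x1 * x2))) *
            ENNReal.ofReal (FK ((μ (Set.Ici (max x1 x2))).toReal)) ∂ν ∂ν := by
  have : NullSingletonClass μ := ⟨hμ_atomless⟩
  obtain rfl : μinv = tailInv μ := funext hμinv
  obtain rfl : τ = rejection μ dνdμ := funext fun u => funext (hτ u)
  set L : ℝ → ℝ≥0∞ := fun x => ENNReal.ofReal (-Real.log (π x))
  have hL : Measurable L := ENNReal.measurable_ofReal.comp (Real.measurable_log.comp hπmeas).neg
  have hLmul : Measurable fun p : ℝ × ℝ => L (p.1 * p.2) :=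
    hL.comp (measurable_fst.mul measurable_snd)
  set M : ℝ × ℝ → ℝ≥0∞ := fun p => μ (Ici (max p.1 p.2))
  have hM : Measurable M :=
    (antitone_measure_Ici μ).measurable.comp (measurable_fst.max measurable_snd)
  have hM_fin : ∀ᵐ p ∂ν.prod ν, M p ≠ ⊤ :=
    (Measure.quasiMeasurePreserving_fst.ae (ae_pos_of_measure_Iic_zero hν_supp)).mono
      fun p hp => (hμ_tail _ (hp.trans_le (le_max_left _ _))).ne
  have hg : Continuous fun s : ℝ => s ^ (K - 1) * Real.exp (-s) / Real.Gamma K := by fun_prop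
  calc _ = ∫⁻ t in Ioi 0, ENNReal.ofReal (t ^ (K - 1) * Real.exp (-t) / Real.Gamma K) *
          ∫⁻ p in {p | ENNReal.ofReal t < M p}, L (p.1 * p.2) ∂ν.prod ν :=
        setLIntegral_congr_fun measurableSet_Ioi fun t ht => congrArg _ <| by
          rw [hac]
          exact setLIntegral_Ioi_setLIntegral_Ioi_rejection_mul_rejection hμ_supp hμ_inf hμ_tail
            ht.le hd_meas (fun y => (hd01 y).2) hL (by simp [L, hπ0])
    _ = ∫⁻ p, L (p.1 * p.2) *
          ENNReal.ofReal (∫ t in 0..(M p).toReal, t ^ (K - 1) * Real.exp (-t) / Real.Gamma K)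
            ∂ν.prod ν :=
        setLIntegral_Ioi_ofReal_mul_setLIntegral_lt hg (fun t ht => div_nonneg
          (mul_nonneg (pow_nonneg ht.le _) (Real.exp_nonneg _))
          (Real.Gamma_nonneg_of_nonneg K.cast_nonneg)) hM hLmul hM_fin
    _ = _ := by
        simp only [hFK, max_eq_left ENNReal.toReal_nonneg]
        exact lintegral_prod _ (hLmul.mul (ENNReal.measurable_ofReal.comp
          ((intervalIntegral.continuous_primitive (fun a b => hg.intervalIntegrable a b)
            0).measurable.comp (ENNReal.measurable_toReal.comp hM)))).aemeasurable

/-- Change-of-variables identity for the leading truncation-error term of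
the rejection representation: with `τ(u,γ) = μ←(γ)·1[(dν/dμ)(μ←(γ)) ≥ u]` and `F_K` the
`Gamma(K,1)` CDF, as an identity in `[0,∞]`,
`∫_0^∞ (t^{K−1}e^{−t}/Γ(K)) ∫_t^∞∫_t^∞∫_0^1∫_0^1 −log π(τ(u₁,γ₁)τ(u₂,γ₂)) du₁du₂dγ₁dγ₂ dt
  = ∫∫ −log π(x₁x₂)·F_K(μ([max(x₁,x₂),∞))) ν(dx₁)ν(dx₂)`. -/
theorem rejection_truncation_change_of_variables
    (ν μ : Measure ℝ) [SigmaFinite ν] [SigmaFinite μ]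
    (hν_atomless : ∀ x : ℝ, ν {x} = 0) (hμ_atomless : ∀ x : ℝ, μ {x} = 0)
    (hν_supp : ν (Set.Iic 0) = 0) (hμ_supp : μ (Set.Iic 0) = 0)
    (hν_inf : ν (Set.Ioi 0) = ⊤) (hμ_inf : μ (Set.Ioi 0) = ⊤)
    (hν_tail : ∀ y : ℝ, 0 < y → ν (Set.Ici y) < ⊤)
    (hμ_tail : ∀ y : ℝ, 0 < y → μ (Set.Ici y) < ⊤)
    (dνdμ : ℝ → ℝ) (hd_meas : Measurable dνdμ)
    (hd01 : ∀ y, 0 ≤ dνdμ y ∧ dνdμ y ≤ 1)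
    (hac : ν = μ.withDensity fun y => ENNReal.ofReal (dνdμ y))
    (μinv : ℝ → ℝ)
    (hμinv : ∀ x : ℝ, μinv x = sInf {y : ℝ | 0 < y ∧ μ (Set.Ici y) ≤ ENNReal.ofReal x})
    (π : ℝ → ℝ) (hπmeas : Measurable π)
    (hπ : ∀ x : ℝ, 0 ≤ x → 0 < π x ∧ π x ≤ 1) (hπ0 : π 0 = 1)
    (τ : ℝ → ℝ → ℝ)
    (hτ : ∀ u γ, τ u γ = if u ≤ dνdμ (μinv γ) then μinv γ else 0)
    (K : ℕ) (hK : 1 ≤ K)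
    (FK : ℝ → ℝ)
    (hFK : ∀ t, FK t = ∫ s in (0 : ℝ)..(max t 0),
        s ^ (K - 1) * Real.exp (-s) / Real.Gamma K) :
    ∫⁻ t in Set.Ioi (0 : ℝ),
        ENNReal.ofReal (t ^ (K - 1) * Real.exp (-t) / Real.Gamma K) *
          ∫⁻ γ2 in Set.Ioi t, ∫⁻ γ1 in Set.Ioi t,
            ∫⁻ u2 in Set.Icc (0 : ℝ) 1, ∫⁻ u1 in Set.Icc (0 : ℝ) 1,
              ENNReal.ofReal (-Real.log (π (τ u1 γ1 * τ u2 γ2)))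
      = ∫⁻ x1, ∫⁻ x2,
          ENNReal.ofReal (-Real.log (π (x1 * x2))) *
            ENNReal.ofReal (FK ((μ (Set.Ici (max x1 x2))).toReal)) ∂ν ∂ν :=
  rejection_truncation_change_of_variables_general ν μ hμ_atomless hν_supp hμ_supp hμ_inf hμ_tail
    dνdμ hd_meas hd01 hac μinv hμinv π hπmeas hπ0 τ hτ K FK hFK
end

section
/- Let γ' > 0 and λ > 1/2, and let c > 1 be the unique real number satisfying 3γ'·log c = 1/c. Let F_K(t) = ∫_0^{max(t,0)} s^{K−1} e^{−s} / Γ(K) ds be the Gamma(K,1) cumulative distribution function. Then there exists K₀ ∈ ℕ such that for all K ≥ K₀, ∫_0^1 (1−x)^{2(λ−1)} · F_K(−γ'·log x) dx ≤ 2·c^{−K}. -/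
/-!
Split the integral at `δ = c^(-21K/20)`. Below `δ` the integrand is at most `2`, since
`F_K ≤ 1` and the weight is at most `(1 - x)⁻¹`; this part contributes at most `2δ ≤ c^(-K)` as
soon as `c^(K/20) ≥ 2`. Above `δ` the argument of `F_K` is at most `-γ' log δ = 7K/(20c)` by the
defining equation of `c`, and `F_K(t) ≤ t^K/K!` together with `K^K/K! ≤ e^K` gives
`F_K ≤ (7e/20)^K c^(-K)`. As `7e/20 < 1`, this is eventually at most `(2λ - 1) c^(-K)`, and the
weight integrates to `1/(2λ - 1)`.
-/

open MeasureTheory Real Set Filter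
open scoped Nat

noncomputable def gammaCDF (K : ℕ) (t : ℝ) : ℝ :=
  ∫ s in (0 : ℝ)..(max t 0), s ^ (K - 1) * exp (-s) / Gamma K

lemma gammaCDF_zero (t : ℝ) : gammaCDF 0 t = 0 := by
  simp [gammaCDF]

lemma gammaCDF_succ (k : ℕ) (t : ℝ) :
    gammaCDF (k + 1) t = (∫ s in (0 : ℝ)..(max t 0), s ^ k * exp (-s)) / k ! := by
  rw [gammaCDF, intervalIntegral.integral_div, Nat.cast_succ, Gamma_nat_eq_factorial,
    Nat.add_sub_cancel]

lemma continuous_gammaCDF (K : ℕ) : Continuous (gammaCDF K) :=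
  (intervalIntegral.continuous_primitive
    (fun _ _ => (by fun_prop : Continuous _).intervalIntegrable _ _) 0).comp
    (continuous_id.max continuous_const)

lemma monotone_gammaCDF (K : ℕ) : Monotone (gammaCDF K) := by
  intro t t' htt'
  refine intervalIntegral.integral_mono_interval le_rfl (le_max_right t 0)
    (max_le_max_right 0 htt') ?_ ((by fun_prop : Continuous _).intervalIntegrable _ _)
  filter_upwards [ae_restrict_mem measurableSet_Ioc] with s hs
  exact div_nonneg (mul_nonneg (pow_nonneg hs.1.le _) (exp_nonneg _))
    (Gamma_nonneg_of_nonneg K.cast_nonneg)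

lemma gammaCDF_nonneg (K : ℕ) (t : ℝ) : 0 ≤ gammaCDF K t := by
  simpa [gammaCDF] using monotone_gammaCDF K (le_max_right t 0)

lemma gammaCDF_le_one (K : ℕ) (t : ℝ) : gammaCDF K t ≤ 1 := by
  rcases K with _ | k
  · simp [gammaCDF_zero]
  rw [gammaCDF_succ, div_le_one (by positivity)]
  simpa using intervalIntegral_pow_mul_exp_neg_le (k := k) (le_max_right t 0) one_pos

lemma gammaCDF_le_pow_div_factorial (K : ℕ) {t : ℝ} (ht : 0 ≤ t) :
    gammaCDF K t ≤ t ^ K / K ! := by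
  rcases K with _ | k
  · simp [gammaCDF_zero]
  rw [gammaCDF_succ, max_eq_left ht]
  calc (∫ s in (0 : ℝ)..t, s ^ k * exp (-s)) / k !
      ≤ (∫ s in (0 : ℝ)..t, s ^ k) / k ! := by
        gcongr
        refine intervalIntegral.integral_mono_on ht
          ((by fun_prop : Continuous _).intervalIntegrable _ _)
          ((by fun_prop : Continuous _).intervalIntegrable _ _) fun s hs => ?_
        exact mul_le_of_le_one_right (pow_nonneg hs.1 k) (exp_le_one_iff.2 (by linarith [hs.1]))
    _ = t ^ (k + 1) / (k + 1)! := by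
        rw [integral_pow, Nat.factorial_succ]
        push_cast
        field_simp
        ring

lemma gammaCDF_mul_natCast_le (K : ℕ) {a : ℝ} (ha : 0 ≤ a) :
    gammaCDF K (a * K) ≤ (exp 1 * a) ^ K := by
  calc gammaCDF K (a * K) ≤ a ^ K * ((K : ℝ) ^ K / K !) := by
        simpa [mul_pow, mul_div_assoc] using
          gammaCDF_le_pow_div_factorial K (by positivity : 0 ≤ a * K)
    _ ≤ a ^ K * exp K := by gcongr; exact pow_div_factorial_le_exp _ K.cast_nonneg K
    _ = (exp 1 * a) ^ K := by rw [← exp_one_pow, mul_pow, mul_comm]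

lemma integrableOn_one_sub_rpow_Ioo {q : ℝ} (hq : -1 < q) :
    IntegrableOn (fun x : ℝ => (1 - x) ^ q) (Ioo 0 1) := by
  have h :=
    ((intervalIntegral.intervalIntegrable_rpow' (a := 0) (b := 1) hq).comp_sub_left 1).symm
  norm_num at h
  rwa [intervalIntegrable_iff_integrableOn_Ioo_of_le zero_le_one] at h

lemma integral_one_sub_rpow_Ioo {q : ℝ} (hq : -1 < q) :
    ∫ x in Ioo (0 : ℝ) 1, (1 - x) ^ q = 1 / (q + 1) := by
  rw [← integral_Ioc_eq_integral_Ioo, ← intervalIntegral.integral_of_le zero_le_one]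
  have h := intervalIntegral.integral_comp_sub_left (a := 0) (b := 1) (fun y : ℝ => y ^ q) 1
  norm_num at h
  rw [h, integral_rpow (Or.inl hq), one_rpow, zero_rpow (by linarith)]
  ring

lemma one_sub_rpow_le_two {q x : ℝ} (hq : -1 ≤ q) (hx0 : 0 ≤ x) (hx : x ≤ 1 / 2) :
    (1 - x) ^ q ≤ 2 := by
  calc (1 - x) ^ q ≤ (1 - x) ^ (-1 : ℝ) :=
        rpow_le_rpow_of_exponent_ge (by linarith) (by linarith) hq
    _ ≤ 2 := by rw [rpow_neg_one]; exact inv_le_of_inv_le₀ (by norm_num) (by linarith)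

lemma integral_one_sub_rpow_mul_le {q δ M : ℝ} {f : ℝ → ℝ} (hq : -1 < q) (hδ0 : 0 < δ)
    (hδ : δ ≤ 1 / 2) (hfm : AEStronglyMeasurable f (volume.restrict (Ioo 0 1)))
    (hf0 : ∀ x ∈ Ioo (0 : ℝ) 1, 0 ≤ f x) (hf1 : ∀ x ∈ Ioo (0 : ℝ) 1, f x ≤ 1)
    (hfM : ∀ x ∈ Ico δ 1, f x ≤ M) :
    ∫ x in Ioo (0 : ℝ) 1, (1 - x) ^ q * f x ≤ 2 * δ + M / (q + 1) := by
  have hM : 0 ≤ M := (hf0 δ ⟨hδ0, by linarith⟩).trans (hfM δ ⟨le_rfl, by linarith⟩)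
  have hw := integrableOn_one_sub_rpow_Ioo hq
  have hw0 : ∀ x ∈ Ioo (0 : ℝ) 1, 0 ≤ (1 - x) ^ q := fun x hx =>
    rpow_nonneg (by linarith [hx.2]) q
  have hint : IntegrableOn (fun x => (1 - x) ^ q * f x) (Ioo 0 1) := by
    refine hw.mono' (hw.aestronglyMeasurable.mul hfm) ?_
    filter_upwards [ae_restrict_mem measurableSet_Ioo] with x hx
    rw [norm_mul, Real.norm_of_nonneg (hw0 x hx), Real.norm_of_nonneg (hf0 x hx)]
    exact mul_le_of_le_one_right (hw0 x hx) (hf1 x hx)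
  have hind : IntegrableOn ((Ioo 0 δ).indicator fun _ => (2 : ℝ)) (Ioo 0 1) :=
    (integrableOn_const (by simp) (by simp)).indicator measurableSet_Ioo
  have hpt : ∀ x ∈ Ioo (0 : ℝ) 1,
      (1 - x) ^ q * f x ≤ (Ioo 0 δ).indicator (fun _ => 2) x + M * (1 - x) ^ q := by
    intro x hx
    by_cases hxδ : x < δ
    · rw [indicator_of_mem (show x ∈ Ioo 0 δ from ⟨hx.1, hxδ⟩)]
      have := one_sub_rpow_le_two hq.le hx.1.le (by linarith)
      nlinarith [hw0 x hx, hf1 x hx, hf0 x hx, mul_nonneg hM (hw0 x hx)]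
    · rw [indicator_of_notMem fun h => hxδ h.2, zero_add, mul_comm M]
      exact mul_le_mul_of_nonneg_left (hfM x ⟨not_lt.1 hxδ, hx.2⟩) (hw0 x hx)
  calc ∫ x in Ioo (0 : ℝ) 1, (1 - x) ^ q * f x
      ≤ ∫ x in Ioo (0 : ℝ) 1, ((Ioo 0 δ).indicator (fun _ => 2) x + M * (1 - x) ^ q) :=
        setIntegral_mono_on hint (hind.add (hw.const_mul M)) measurableSet_Ioo hpt
    _ = 2 * δ + M / (q + 1) := by
        rw [integral_add hind (hw.const_mul M), setIntegral_indicator measurableSet_Ioo,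
          inter_eq_right.2 (Ioo_subset_Ioo_right (by linarith)), integral_const_mul,
          integral_one_sub_rpow_Ioo hq, setIntegral_const, Real.volume_real_Ioo_of_le hδ0.le,
          smul_eq_mul]
        ring

lemma integral_one_sub_rpow_mul_gammaCDF_neg_log_le (K : ℕ) {γ q δ : ℝ} (hγ : 0 ≤ γ)
    (hq : -1 < q) (hδ0 : 0 < δ) (hδ : δ ≤ 1 / 2) :
    ∫ x in Ioo (0 : ℝ) 1, (1 - x) ^ q * gammaCDF K (-γ * log x)
      ≤ 2 * δ + gammaCDF K (-γ * log δ) / (q + 1) := by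
  refine integral_one_sub_rpow_mul_le hq hδ0 hδ ?_ (fun x _ => gammaCDF_nonneg K _)
    (fun x _ => gammaCDF_le_one K _) fun x hx => monotone_gammaCDF K ?_
  · exact ((continuous_gammaCDF K).measurable.comp
      (measurable_const.mul measurable_log)).aestronglyMeasurable
  · simpa only [neg_mul, neg_le_neg_iff] using
      mul_le_mul_of_nonneg_left (log_le_log hδ0 hx.1) hγ

lemma two_mul_exp_neg_le_one_div_pow {c ε : ℝ} (hc : 0 < c) {K : ℕ}
    (hK : log 2 ≤ ε * (K * log c)) :
    2 * exp (-((1 + ε) * (K * log c))) ≤ 1 / c ^ K := by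
  rw [one_div, ← exp_log hc, ← exp_nat_mul, ← exp_neg, ← exp_log two_pos, ← exp_add, exp_log hc]
  exact exp_le_exp.2 (by linarith)

/-- Key estimate for the dense (`α = 0`) beta–Bernoulli network: for
`γ' > 0`, `λ > 1/2`, and `c > 1` the unique solution of `3γ'·log c = 1/c`, there exists
`K₀` such that for all `K ≥ K₀`,
`∫_0^1 (1−x)^{2(λ−1)} F_K(−γ' log x) dx ≤ 2·c^{−K}`,
where `F_K` is the `Gamma(K,1)` CDF. -/
theorem dense_beta_bernoulli_truncation_integral_bound
    (γ' lam : ℝ) (hγ' : 0 < γ') (hlam : 1 / 2 < lam)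
    (c : ℝ) (hc : 1 < c) (hceq : 3 * γ' * Real.log c = 1 / c)
    (FK : ℕ → ℝ → ℝ)
    (hFK : ∀ (K : ℕ) (t : ℝ), FK K t = ∫ s in (0 : ℝ)..(max t 0),
        s ^ (K - 1) * Real.exp (-s) / Real.Gamma K) :
    ∃ K₀ : ℕ, ∀ K : ℕ, K₀ ≤ K →
      ∫ x in Set.Ioo (0 : ℝ) 1, (1 - x) ^ (2 * (lam - 1)) * FK K (-γ' * Real.log x)
        ≤ 2 / c ^ K := by
  obtain rfl : FK = gammaCDF := funext fun K => funext (hFK K)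
  have hlogc : 0 < log c := log_pos hc
  have hγlogc : γ' * log c = 1 / (3 * c) := by
    field_simp at hceq ⊢
    linarith
  have hq : 0 < 2 * (lam - 1) + 1 := by linarith
  have hr : 7 * exp 1 / 20 < 1 := by linarith [exp_one_lt_d9]
  obtain ⟨K₀, hK₀⟩ :=
    (((tendsto_pow_atTop_nhds_zero_of_lt_one (by positivity) hr).eventually (ge_mem_nhds hq)).and
      (tendsto_natCast_atTop_atTop.eventually_ge_atTop (20 * log 2 / log c))).exists_forall_of_atTop
  refine ⟨K₀, fun K hK => ?_⟩
  obtain ⟨hrK, hKlog⟩ := hK₀ K hK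
  set δ := exp (-((1 + 1 / 20) * (K * log c)))
  have hδ : 2 * δ ≤ 1 / c ^ K :=
    two_mul_exp_neg_le_one_div_pow (by linarith) (by linarith [(div_le_iff₀ hlogc).1 hKlog])
  have hδ_half : δ ≤ 1 / 2 := by
    linarith [(div_le_one (by positivity)).2 (one_le_pow₀ hc.le : 1 ≤ c ^ K)]
  have hM : gammaCDF K (-γ' * log δ) ≤ (7 * exp 1 / 20) ^ K / c ^ K := by
    have hlogδ : -γ' * log δ = 7 / (20 * c) * K := by
      rw [log_exp]
      linear_combination (21 / 20 * (K : ℝ)) * hγlogc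
    rw [hlogδ, ← div_pow]
    convert gammaCDF_mul_natCast_le K (by positivity : 0 ≤ 7 / (20 * c)) using 2
    field_simp
  calc _ ≤ 2 * δ + gammaCDF K (-γ' * log δ) / (2 * (lam - 1) + 1) :=
        integral_one_sub_rpow_mul_gammaCDF_neg_log_le K hγ'.le (by linarith) (exp_pos _) hδ_half
    _ ≤ 1 / c ^ K + (2 * (lam - 1) + 1) / c ^ K / (2 * (lam - 1) + 1) := by
        gcongr
        exact hM.trans (by gcongr)
    _ = 2 / c ^ K := by field_simp; ring
end
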